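/- arXiv:2106.02371 — 5 statements merged into one kernel-verified Lean document; each statement's English description precedes it below -/
import Mathlib

section
/- Suppose I and J are nonempty sets of men and women, x : I → 𝒳 and y : J → 𝒴 are surjective group maps onto the finite nonempty sets 𝒳 and 𝒴, and each man i has a taste vector ε_i : 𝒴₀ → ℝ and each woman j a taste vector η_j : 𝒳₀ → ℝ. Joint utilities are separable: Φ̃_{ij} = Φ_{x_i y_j} + ε_i(y_j) + η_j(x_i) for a given Φ : 𝒳×𝒴 → ℝ, Φ̃_{i0} = ε_i(0), Φ̃_{0j} = η_j(0). Let M ⊆ I×J be a matching (each i belongs to at most one pair of M, and each j belongs to at most one pair of M) and let ũ : I → ℝ, ṽ : J → ℝ satisfy the stability conditions: ũ_i ≥ ε_i(0) with equality whenever i is unmatched; ṽ_j ≥ η_j(0) with equality whenever j is unmatched; and ũ_i + ṽ_j ≥ Φ̃_{ij} for all (i,j) ∈ I×J, with equality whenever (i,j) ∈ M. Then there exist U, V : 𝒳×𝒴 → ℝ, extended by U_{x0} = 0 and V_{0y} = 0, such that: (i) for every (i,j) ∈ M with x_i = x and y_j = y*, one has U_{x y*} + ε_i(y*) ≥ U_{x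 ŷ} + ε_i(ŷ) for all ŷ ∈ 𝒴₀ and ũ_i = U_{x y*} + ε_i(y*); and for every unmatched i with x_i = x, ε_i(0) ≥ U_{x ŷ} + ε_i(ŷ) for all ŷ ∈ 𝒴₀ and ũ_i = ε_i(0); (ii) symmetrically, for every (i,j) ∈ M with x_i = x* and y_j = y, V_{x* y} + η_j(x*) ≥ V_{x̂ y} + η_j(x̂) for all x̂ ∈ 𝒳₀ and ṽ_j = V_{x* y} + η_j(x*), and the analogous statement for unmatched j; (iii) U_{xy} + V_{xy} ≥ Φ_{xy} for all (x,y) ∈ 𝒳×𝒴, with equality whenever some pair (i,j) ∈ M has x_i = x and y_j = y. -/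
/-- Extension of `U : 𝒳 → 𝒴 → ℝ` to `𝒴₀ = Option 𝒴` by `U_{x0} = 0`. -/
noncomputable def optExt {Y : Type*} (U : Y → ℝ) : Option Y → ℝ :=
  fun yo => yo.elim 0 U

/-- **Splitting the surplus (Proposition 1).**
Under separability, any stable outcome is supported by systematic utilities
`U, V` (extended by `U_{x0} = 0`, `V_{0y} = 0`) such that matched and single
agents solve the corresponding discrete choice problems, and
`U_{xy} + V_{xy} ≥ Φ_{xy}` with equality on matched cells. -/
theorem splitting_the_surplus
    {I J X Y : Type*} [Nonempty I] [Nonempty J]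
    [Finite X] [Nonempty X] [Finite Y] [Nonempty Y]
    (x : I → X) (y : J → Y)
    (hx : Function.Surjective x) (hy : Function.Surjective y)
    (ε : I → Option Y → ℝ) (η : J → Option X → ℝ)
    (Φ : X → Y → ℝ)
    -- joint utilities (separability)
    (Φt : I → J → ℝ)
    (hΦt : ∀ i j, Φt i j = Φ (x i) (y j) + ε i (some (y j)) + η j (some (x i)))
    -- the matching
    (M : Set (I × J))
    (hM1 : ∀ i j j', (i, j) ∈ M → (i, j') ∈ M → j = j')
    (hM2 : ∀ i i' j, (i, j) ∈ M → (i', j) ∈ M → i = i')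
    -- payoffs and stability
    (ut : I → ℝ) (vt : J → ℝ)
    (hu : ∀ i, ε i none ≤ ut i)
    (hu0 : ∀ i, (¬ ∃ j, (i, j) ∈ M) → ut i = ε i none)
    (hv : ∀ j, η j none ≤ vt j)
    (hv0 : ∀ j, (¬ ∃ i, (i, j) ∈ M) → vt j = η j none)
    (hstab : ∀ i j, Φt i j ≤ ut i + vt j)
    (hmatch : ∀ i j, (i, j) ∈ M → ut i + vt j = Φt i j) :
    ∃ U V : X → Y → ℝ,
      -- (i) men's discrete choice problem
      (∀ i j, (i, j) ∈ M →
        (∀ yo : Option Y, optExt (U (x i)) yo + ε i yo ≤ U (x i) (y j) + ε i (some (y j))) ∧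
        ut i = U (x i) (y j) + ε i (some (y j))) ∧
      (∀ i, (¬ ∃ j, (i, j) ∈ M) →
        (∀ yo : Option Y, optExt (U (x i)) yo + ε i yo ≤ ε i none) ∧
        ut i = ε i none) ∧
      -- (ii) women's discrete choice problem
      (∀ i j, (i, j) ∈ M →
        (∀ xo : Option X, optExt (fun x' => V x' (y j)) xo + η j xo ≤
          V (x i) (y j) + η j (some (x i))) ∧
        vt j = V (x i) (y j) + η j (some (x i))) ∧
      (∀ j, (¬ ∃ i, (i, j) ∈ M) →
        (∀ xo : Option X, optExt (fun x' => V x' (y j)) xo + η j xo ≤ η j none) ∧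
        vt j = η j none) ∧
      -- (iii) surplus splitting
      (∀ x' y', Φ x' y' ≤ U x' y' + V x' y') ∧
      (∀ x' y', (∃ i j, (i, j) ∈ M ∧ x i = x' ∧ y j = y') →
        U x' y' + V x' y' = Φ x' y') := by

  classical
  set U : X → Y → ℝ := fun a b => ⨅ i : {i : I // x i = a}, (ut i.1 - ε i.1 (some b)) with hU
  have hne : ∀ a : X, Nonempty {i : I // x i = a} := fun a => by
    obtain ⟨i, hi⟩ := hx a; exact ⟨⟨i, hi⟩⟩
  have bdd : ∀ a b, BddBelow (Set.range fun i : {i : I // x i = a} =>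
      ut i.1 - ε i.1 (some b)) := by
    intro a b
    obtain ⟨j0, hj0⟩ := hy b
    refine ⟨Φ a b + η j0 (some a) - vt j0, ?_⟩
    rintro _ ⟨⟨i, hi⟩, rfl⟩
    have := hstab i j0
    rw [hΦt, hi, hj0] at this
    simp only; linarith
  have hUle : ∀ (a : X) (b : Y) (i : I), x i = a → U a b ≤ ut i - ε i (some b) := by
    intro a b i hi
    exact ciInf_le (bdd a b) ⟨i, hi⟩
  have hleU : ∀ (a : X) (b : Y) (c : ℝ), (∀ i : I, x i = a → c ≤ ut i - ε i (some b)) →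
      c ≤ U a b := by
    intro a b c h
    have := hne a
    exact le_ciInf (fun i => h i.1 i.2)
  have hUeq : ∀ i j, (i, j) ∈ M → U (x i) (y j) = ut i - ε i (some (y j)) := by
    intro i j hij
    refine le_antisymm (hUle _ _ i rfl) (hleU _ _ _ ?_)
    intro i' hi'
    have h1 := hstab i' j
    have h2 := hmatch i j hij
    rw [hΦt, hi'] at h1
    rw [hΦt] at h2
    linarith
  refine ⟨U, fun a b => Φ a b - U a b, ?_, ?_, ?_, ?_, ?_, ?_⟩
  · intro i j hij
    have heq := hUeq i j hij
    constructor
    · rintro (_ | yh)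
      · simp only [optExt, Option.elim]
        have := hu i; linarith
      · simp only [optExt, Option.elim]
        have := hUle (x i) yh i rfl
        linarith
    · linarith
  · intro i hi
    have hut := hu0 i hi
    refine ⟨?_, hut⟩
    rintro (_ | yh)
    · simp [optExt]
    · simp only [optExt, Option.elim]
      have := hUle (x i) yh i rfl
      linarith
  · intro i j hij
    have heq := hUeq i j hij
    have h2 := hmatch i j hij
    rw [hΦt] at h2
    constructor
    · rintro (_ | xh)
      · simp only [optExt, Option.elim]
        have := hv j; linarith
      · simp only [optExt, Option.elim]
        have hge : Φ xh (y j) + η j (some xh) - vt j ≤ U xh (y j) := by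
          refine hleU _ _ _ ?_
          intro i' hi'
          have h1 := hstab i' j
          rw [hΦt, hi'] at h1
          linarith
        linarith
    · show vt j = Φ (x i) (y j) - U (x i) (y j) + η j (some (x i)); linarith
  · intro j hj
    have hvt := hv0 j hj
    refine ⟨?_, hvt⟩
    rintro (_ | xh)
    · simp [optExt, hvt]
    · simp only [optExt, Option.elim]
      have hge : Φ xh (y j) + η j (some xh) - vt j ≤ U xh (y j) := by
        refine hleU _ _ _ ?_
        intro i' hi'
        have h1 := hstab i' j
        rw [hΦt, hi'] at h1
        linarith
      linarith
  · intro a b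
    show Φ a b ≤ U a b + (Φ a b - U a b); linarith
  · rintro a b ⟨i, j, hij, rfl, rfl⟩
    show U (x i) (y j) + (Φ (x i) (y j) - U (x i) (y j)) = Φ (x i) (y j); ring
end

section
/- In the Choo–Siow (multinomial logit) model, the IPFP algorithm converges: fix Φ : 𝒳×𝒴 → ℝ and strictly positive margins n : 𝒳 → ℝ, m : 𝒴 → ℝ, choose any strictly positive initial values μ_0y^{(0)} > 0, and define recursively, for k = 0, 1, 2, …: A_x^{(k)} = Σ_{y∈𝒴} exp(Φ_xy/2) √(μ_0y^{(2k)}) and μ_x0^{(2k+1)} = ( √(n_x + (A_x^{(k)})²/4) − A_x^{(k)}/2 )², then B_y^{(k)} = Σ_{x∈𝒳} exp(Φ_xy/2) √(μ_x0^{(2k+1)}) and μ_0y^{(2k+2)} = ( √(m_y + (B_y^{(k)})²/4) − B_y^{(k)}/2 )². Then the sequences (μ_x0^{(2k+1)})_k and (μ_0y^{(2k+2)})_k converge to strictly positive limits μ_x0* and μ_0y* satisfying μ_x0* + √(μ_x0*) Σ_{y∈𝒴} exp(Φ_xy/2) √(μ_0y*) = n_x for every x and μ_0y* + √(μ_0y*)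 Σ_{x∈𝒳} exp(Φ_xy/2) √(μ_x0*) = m_y for every y, and the matching μ*_xy = exp(Φ_xy/2) √(μ_x0* μ_0y*) is the unique maximizer of μ ↦ Σ_{x,y} μ_xy Φ_xy + 𝓔_CS(μ, n, m) over feasible matchings. -/
open MeasureTheory Real
open scoped Classical

noncomputable section

variable {X Y : Type*} [Fintype X] [Nonempty X] [Fintype Y] [Nonempty Y]

/-- A feasible matching. -/
def Feasible (n : X → ℝ) (m : Y → ℝ) (μ : X → Y → ℝ) : Prop :=
  (∀ x y, 0 ≤ μ x y) ∧ (∀ x, ∑ y, μ x y ≤ n x) ∧ (∀ y, ∑ x, μ x y ≤ m y)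

/-- The Choo–Siow entropy of matching, with value `−∞` when some entry of the
matching (including the masses of singles) vanishes. -/
def ECS (n : X → ℝ) (m : Y → ℝ) (μ : X → Y → ℝ) : EReal :=
  if (∀ x y, 0 < μ x y) ∧ (∀ x, 0 < n x - ∑ y, μ x y) ∧ (∀ y, 0 < m y - ∑ x, μ x y) then
    (((-∑ x, ((∑ y, μ x y * Real.log (μ x y / n x)) +
        (n x - ∑ y, μ x y) * Real.log ((n x - ∑ y', μ x y') / n x)))
      - ∑ y, ((∑ x, μ x y * Real.log (μ x y / m y)) +
        (m y - ∑ x, μ x y) * Real.log ((m y - ∑ x', μ x' y) / m y)) : ℝ) : EReal)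
  else ⊥

/-- The Choo–Siow social gain of a matching. -/
def CSGain (n : X → ℝ) (m : Y → ℝ) (Φ : X → Y → ℝ) (μ : X → Y → ℝ) : EReal :=
  ((∑ x, ∑ y, μ x y * Φ x y : ℝ) : EReal) + ECS n m μ

open Filter Topology

section IPFPaux
open Real Finset Filter Topology
noncomputable def IPFPphi (A c : ℝ) : ℝ := Real.sqrt (c + A^2/4) - A/2

lemma IPFPphi_pos {A c : ℝ} (hA : 0 ≤ A) (hc : 0 < c) : 0 < IPFPphi A c := by
  have h : A/2 < Real.sqrt (c + A^2/4) := by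
    rw [show A/2 = Real.sqrt ((A/2)^2) from (Real.sqrt_sq (by positivity)).symm]
    apply Real.sqrt_lt_sqrt (by positivity)
    nlinarith
  simpa [IPFPphi] using sub_pos.2 h

lemma IPFPphi_eq {A c : ℝ} (hA : 0 ≤ A) (hc : 0 < c) :
    IPFPphi A c ^ 2 + A * IPFPphi A c = c := by
  have h : Real.sqrt (c + A^2/4) ^ 2 = c + A^2/4 := Real.sq_sqrt (by positivity)
  unfold IPFPphi
  nlinarith [h]

lemma IPFPle_phi {A c s : ℝ} (hA : 0 ≤ A) (hc : 0 < c) (hs : 0 ≤ s)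
    (h : s^2 + A*s ≤ c) : s ≤ IPFPphi A c := by
  by_contra hlt
  push_neg at hlt
  have := IPFPphi_eq hA hc
  have hp := IPFPphi_pos hA hc
  nlinarith

lemma IPFPlt_phi {A c s : ℝ} (hA : 0 ≤ A) (hc : 0 < c) (hs : 0 ≤ s)
    (h : s^2 + A*s < c) : s < IPFPphi A c := by
  by_contra hlt
  push_neg at hlt
  have := IPFPphi_eq hA hc
  have hp := IPFPphi_pos hA hc
  nlinarith

lemma IPFPphi_le {A c s : ℝ} (hA : 0 ≤ A) (hc : 0 < c) (hs : 0 ≤ s)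
    (h : c ≤ s^2 + A*s) : IPFPphi A c ≤ s := by
  by_contra hlt
  push_neg at hlt
  have := IPFPphi_eq hA hc
  have hp := IPFPphi_pos hA hc
  nlinarith

lemma IPFPphi_lt {A c s : ℝ} (hA : 0 ≤ A) (hc : 0 < c) (hs : 0 ≤ s)
    (h : c < s^2 + A*s) : IPFPphi A c < s := by
  by_contra hlt
  push_neg at hlt
  have := IPFPphi_eq hA hc
  have hp := IPFPphi_pos hA hc
  nlinarith

lemma IPFPphi_anti {A A' c : ℝ} (hA : 0 ≤ A) (hA' : A ≤ A') (hc : 0 < c) :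
    IPFPphi A' c ≤ IPFPphi A c := by
  have hp := IPFPphi_pos (hA.trans hA') hc
  have he := IPFPphi_eq (hA.trans hA') hc
  exact IPFPle_phi hA hc hp.le (by nlinarith)

lemma IPFPphi_anti_strict {A A' c : ℝ} (hA : 0 ≤ A) (hA' : A < A') (hc : 0 < c) :
    IPFPphi A' c < IPFPphi A c := by
  have hp := IPFPphi_pos (hA.trans hA'.le) hc
  have he := IPFPphi_eq (hA.trans hA'.le) hc
  exact IPFPlt_phi hA hc hp.le (by nlinarith)

lemma IPFPphi_le_sqrt {A c : ℝ} (hA : 0 ≤ A) (hc : 0 < c) :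
    IPFPphi A c ≤ Real.sqrt c := by
  have hp := IPFPphi_pos hA hc
  have he := IPFPphi_eq hA hc
  have h2 : IPFPphi A c ^ 2 ≤ c := by nlinarith
  nlinarith [Real.sq_sqrt hc.le, Real.sqrt_nonneg c]

lemma IPFPphi_cont (c : ℝ) : Continuous fun A : ℝ => IPFPphi A c := by
  unfold IPFPphi; fun_prop


-- Bregman divergence of t ↦ t log t
lemma IPFPD_nonneg {p q : ℝ} (hp : 0 < p) (hq : 0 < q) :
    0 ≤ p * Real.log p - q * Real.log q - (Real.log q + 1) * (p - q) := by
  have h : Real.log (q/p) ≤ q/p - 1 := Real.log_le_sub_one_of_pos (by positivity)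
  rw [Real.log_div hq.ne' hp.ne'] at h
  have h2 : p * (Real.log q - Real.log p) ≤ p * (q/p - 1) := by nlinarith
  have h3 : p * (q/p - 1) = q - p := by field_simp
  nlinarith

lemma IPFPD_pos {p q : ℝ} (hp : 0 < p) (hq : 0 < q) (hne : p ≠ q) :
    0 < p * Real.log p - q * Real.log q - (Real.log q + 1) * (p - q) := by
  have hqp : q/p ≠ 1 := by
    intro h; exact hne (by field_simp at h; linarith)
  have h : Real.log (q/p) < q/p - 1 := Real.log_lt_sub_one_of_pos (by positivity) hqp
  rw [Real.log_div hq.ne' hp.ne'] at h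
  have h2 : p * (Real.log q - Real.log p) < p * (q/p - 1) := by nlinarith
  have h3 : p * (q/p - 1) = q - p := by field_simp
  nlinarith

noncomputable def IPFPG {X Y : Type*} [Fintype X] [Fintype Y]
    (n : X → ℝ) (m : Y → ℝ) (Φ : X → Y → ℝ) (μ : X → Y → ℝ) : ℝ :=
  (∑ x, ∑ y, μ x y * Φ x y) +
  ((-∑ x, ((∑ y, μ x y * Real.log (μ x y / n x)) +
      (n x - ∑ y, μ x y) * Real.log ((n x - ∑ y', μ x y') / n x)))
    - ∑ y, ((∑ x, μ x y * Real.log (μ x y / m y)) +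
      (m y - ∑ x, μ x y) * Real.log ((m y - ∑ x', μ x' y) / m y)))

lemma IPFPG_decomp {X Y : Type*} [Fintype X] [Fintype Y]
    (n : X → ℝ) (m : Y → ℝ) (Φ : X → Y → ℝ) (μ : X → Y → ℝ)
    (hn : ∀ x, 0 < n x) (hm : ∀ y, 0 < m y)
    (hμ : ∀ x y, 0 < μ x y)
    (hr : ∀ x, 0 < n x - ∑ y, μ x y) (hc : ∀ y, 0 < m y - ∑ x, μ x y) :
    IPFPG n m Φ μ =
      (∑ x, ∑ y, (μ x y * Φ x y - 2 * (μ x y * Real.log (μ x y))))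
      - ∑ x, (n x - ∑ y, μ x y) * Real.log (n x - ∑ y, μ x y)
      - ∑ y, (m y - ∑ x, μ x y) * Real.log (m y - ∑ x, μ x y)
      + ∑ x, n x * Real.log (n x) + ∑ y, m y * Real.log (m y) := by
  have hX : ∀ x, ((∑ y, μ x y * Real.log (μ x y / n x)) +
      (n x - ∑ y, μ x y) * Real.log ((n x - ∑ y', μ x y') / n x))
      = (∑ y, μ x y * Real.log (μ x y))
        + (n x - ∑ y, μ x y) * Real.log (n x - ∑ y, μ x y)
        - n x * Real.log (n x) := by
    intro x
    rw [Real.log_div (hr x).ne' (hn x).ne']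
    have h1 : (∑ y, μ x y * Real.log (μ x y / n x))
        = ∑ y, (μ x y * Real.log (μ x y) - μ x y * Real.log (n x)) := by
      refine Finset.sum_congr rfl fun y _ => ?_
      rw [Real.log_div (hμ x y).ne' (hn x).ne']; ring
    rw [h1, Finset.sum_sub_distrib, ← Finset.sum_mul]
    ring
  have hY : ∀ y, ((∑ x, μ x y * Real.log (μ x y / m y)) +
      (m y - ∑ x, μ x y) * Real.log ((m y - ∑ x', μ x' y) / m y))
      = (∑ x, μ x y * Real.log (μ x y))
        + (m y - ∑ x, μ x y) * Real.log (m y - ∑ x, μ x y)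
        - m y * Real.log (m y) := by
    intro y
    rw [Real.log_div (hc y).ne' (hm y).ne']
    have h1 : (∑ x, μ x y * Real.log (μ x y / m y))
        = ∑ x, (μ x y * Real.log (μ x y) - μ x y * Real.log (m y)) := by
      refine Finset.sum_congr rfl fun x _ => ?_
      rw [Real.log_div (hμ x y).ne' (hm y).ne']; ring
    rw [h1, Finset.sum_sub_distrib, ← Finset.sum_mul]
    ring
  unfold IPFPG
  rw [Finset.sum_congr rfl fun x _ => hX x, Finset.sum_congr rfl fun y _ => hY y]
  rw [Finset.sum_sub_distrib, Finset.sum_sub_distrib, Finset.sum_add_distrib,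
    Finset.sum_add_distrib]
  have hsw : ∑ y, ∑ x, μ x y * Real.log (μ x y) = ∑ x, ∑ y, μ x y * Real.log (μ x y) :=
    Finset.sum_comm
  have hsplit : ∑ x, ∑ y, (μ x y * Φ x y - 2 * (μ x y * Real.log (μ x y)))
      = ∑ x, ∑ y, μ x y * Φ x y - 2 * ∑ x, ∑ y, μ x y * Real.log (μ x y) := by
    rw [Finset.mul_sum]
    rw [← Finset.sum_sub_distrib]
    refine Finset.sum_congr rfl fun x _ => ?_
    rw [Finset.mul_sum, ← Finset.sum_sub_distrib]
  rw [hsplit]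
  rw [hsw]
  ring


lemma IPFPkey {X Y : Type*} [Fintype X] [Fintype Y]
    (n : X → ℝ) (m : Y → ℝ) (Φ : X → Y → ℝ) (μ σ : X → Y → ℝ)
    (hlog : ∀ x y, 2 * Real.log (σ x y) =
      Φ x y + Real.log (n x - ∑ y', σ x y') + Real.log (m y - ∑ x', σ x' y)) :
    (∑ x, ∑ y, (σ x y * Φ x y - 2 * (σ x y * Real.log (σ x y))))
      - ∑ x, (n x - ∑ y, σ x y) * Real.log (n x - ∑ y, σ x y)
      - ∑ y, (m y - ∑ x, σ x y) * Real.log (m y - ∑ x, σ x y)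
      - ((∑ x, ∑ y, (μ x y * Φ x y - 2 * (μ x y * Real.log (μ x y))))
      - ∑ x, (n x - ∑ y, μ x y) * Real.log (n x - ∑ y, μ x y)
      - ∑ y, (m y - ∑ x, μ x y) * Real.log (m y - ∑ x, μ x y))
    = (∑ x, ∑ y, (2 * (μ x y * Real.log (μ x y)) - 2 * (σ x y * Real.log (σ x y))
          - 2 * ((Real.log (σ x y) + 1) * (μ x y - σ x y))))
      + (∑ x, ((n x - ∑ y, μ x y) * Real.log (n x - ∑ y, μ x y)
          - (n x - ∑ y, σ x y) * Real.log (n x - ∑ y, σ x y)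
          - (Real.log (n x - ∑ y, σ x y) + 1) * ((n x - ∑ y, μ x y) - (n x - ∑ y, σ x y))))
      + (∑ y, ((m y - ∑ x, μ x y) * Real.log (m y - ∑ x, μ x y)
          - (m y - ∑ x, σ x y) * Real.log (m y - ∑ x, σ x y)
          - (Real.log (m y - ∑ x, σ x y) + 1) * ((m y - ∑ x, μ x y) - (m y - ∑ x, σ x y)))) := by
  have hstar : ∑ x, ∑ y, ((μ x y - σ x y) * Φ x y
      - 2 * ((Real.log (σ x y) + 1) * (μ x y - σ x y))
      + (Real.log (n x - ∑ y', σ x y') + 1) * (μ x y - σ x y)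
      + (Real.log (m y - ∑ x', σ x' y) + 1) * (μ x y - σ x y)) = 0 := by
    refine Finset.sum_eq_zero fun x _ => Finset.sum_eq_zero fun y _ => ?_
    linear_combination (σ x y - μ x y) * (hlog x y)
  have hstar2 : ∑ x, ∑ y, ((μ x y - σ x y) * Φ x y
      - 2 * ((Real.log (σ x y) + 1) * (μ x y - σ x y))
      + (Real.log (n x - ∑ y', σ x y') + 1) * (μ x y - σ x y)
      + (Real.log (m y - ∑ x', σ x' y) + 1) * (μ x y - σ x y))
      = ∑ x, ∑ y, (μ x y - σ x y) * Φ x y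
        - 2 * ∑ x, ∑ y, (Real.log (σ x y) + 1) * (μ x y - σ x y)
        + ∑ x, ∑ y, (Real.log (n x - ∑ y', σ x y') + 1) * (μ x y - σ x y)
        + ∑ x, ∑ y, (Real.log (m y - ∑ x', σ x' y) + 1) * (μ x y - σ x y) := by
    simp only [Finset.sum_add_distrib, Finset.sum_sub_distrib, ← Finset.mul_sum]
  have hΦ : ∑ x, ∑ y, (μ x y - σ x y) * Φ x y
      = ∑ x, ∑ y, μ x y * Φ x y - ∑ x, ∑ y, σ x y * Φ x y := by
    simp only [sub_mul, Finset.sum_sub_distrib]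
  have hB : ∑ x, (Real.log (n x - ∑ y, σ x y) + 1) * ((n x - ∑ y, μ x y) - (n x - ∑ y, σ x y))
      = - ∑ x, ∑ y, (Real.log (n x - ∑ y', σ x y') + 1) * (μ x y - σ x y) := by
    rw [← Finset.sum_neg_distrib]
    refine Finset.sum_congr rfl fun x _ => ?_
    rw [← Finset.mul_sum, Finset.sum_sub_distrib]; ring
  have hC : ∑ y, (Real.log (m y - ∑ x, σ x y) + 1) * ((m y - ∑ x, μ x y) - (m y - ∑ x, σ x y))
      = - ∑ x, ∑ y, (Real.log (m y - ∑ x', σ x' y) + 1) * (μ x y - σ x y) := by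
    rw [Finset.sum_comm (f := fun x y => (Real.log (m y - ∑ x', σ x' y) + 1) * (μ x y - σ x y))]
    rw [← Finset.sum_neg_distrib]
    refine Finset.sum_congr rfl fun y _ => ?_
    rw [← Finset.mul_sum, Finset.sum_sub_distrib]; ring
  have g1 : ∀ (τ : X → Y → ℝ), ∑ x, ∑ y, (τ x y * Φ x y - 2 * (τ x y * Real.log (τ x y)))
      = ∑ x, ∑ y, τ x y * Φ x y - 2 * ∑ x, ∑ y, τ x y * Real.log (τ x y) := by
    intro τ
    simp only [Finset.sum_sub_distrib, ← Finset.mul_sum]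
  have g3 : ∑ x, ∑ y, (2 * (μ x y * Real.log (μ x y)) - 2 * (σ x y * Real.log (σ x y))
      - 2 * ((Real.log (σ x y) + 1) * (μ x y - σ x y)))
      = 2 * ∑ x, ∑ y, μ x y * Real.log (μ x y) - 2 * ∑ x, ∑ y, σ x y * Real.log (σ x y)
        - 2 * ∑ x, ∑ y, (Real.log (σ x y) + 1) * (μ x y - σ x y) := by
    simp only [Finset.sum_sub_distrib, ← Finset.mul_sum]
  have g4n : ∑ x, ((n x - ∑ y, μ x y) * Real.log (n x - ∑ y, μ x y)
          - (n x - ∑ y, σ x y) * Real.log (n x - ∑ y, σ x y)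
          - (Real.log (n x - ∑ y, σ x y) + 1) * ((n x - ∑ y, μ x y) - (n x - ∑ y, σ x y)))
      = ∑ x, (n x - ∑ y, μ x y) * Real.log (n x - ∑ y, μ x y)
        - ∑ x, (n x - ∑ y, σ x y) * Real.log (n x - ∑ y, σ x y)
        - ∑ x, (Real.log (n x - ∑ y, σ x y) + 1) * ((n x - ∑ y, μ x y) - (n x - ∑ y, σ x y)) := by
    simp [Finset.sum_sub_distrib]
  have g4m : ∑ y, ((m y - ∑ x, μ x y) * Real.log (m y - ∑ x, μ x y)
          - (m y - ∑ x, σ x y) * Real.log (m y - ∑ x, σ x y)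
          - (Real.log (m y - ∑ x, σ x y) + 1) * ((m y - ∑ x, μ x y) - (m y - ∑ x, σ x y)))
      = ∑ y, (m y - ∑ x, μ x y) * Real.log (m y - ∑ x, μ x y)
        - ∑ y, (m y - ∑ x, σ x y) * Real.log (m y - ∑ x, σ x y)
        - ∑ y, (Real.log (m y - ∑ x, σ x y) + 1) * ((m y - ∑ x, μ x y) - (m y - ∑ x, σ x y)) := by
    simp [Finset.sum_sub_distrib]
  rw [g1 μ, g1 σ, g3, g4n, g4m, hB, hC]
  rw [hstar2, hΦ] at hstar
  linarith [hstar]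


lemma IPFPG_main {X Y : Type*} [Fintype X] [Fintype Y]
    (n : X → ℝ) (m : Y → ℝ) (Φ : X → Y → ℝ) (μ σ : X → Y → ℝ)
    (hn : ∀ x, 0 < n x) (hm : ∀ y, 0 < m y)
    (hμ : ∀ x y, 0 < μ x y) (hσ : ∀ x y, 0 < σ x y)
    (hrμ : ∀ x, 0 < n x - ∑ y, μ x y) (hcμ : ∀ y, 0 < m y - ∑ x, μ x y)
    (hrσ : ∀ x, 0 < n x - ∑ y, σ x y) (hcσ : ∀ y, 0 < m y - ∑ x, σ x y)
    (hlog : ∀ x y, 2 * Real.log (σ x y) =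
      Φ x y + Real.log (n x - ∑ y', σ x y') + Real.log (m y - ∑ x', σ x' y)) :
    IPFPG n m Φ μ ≤ IPFPG n m Φ σ ∧ (μ ≠ σ → IPFPG n m Φ μ < IPFPG n m Φ σ) := by
  have hkey := IPFPkey n m Φ μ σ hlog
  have hd1 := IPFPG_decomp n m Φ μ hn hm hμ hrμ hcμ
  have hd2 := IPFPG_decomp n m Φ σ hn hm hσ hrσ hcσ
  have hS1 : ∀ x ∈ Finset.univ, ∀ y ∈ (Finset.univ : Finset Y),
      0 ≤ 2 * (μ x y * Real.log (μ x y)) - 2 * (σ x y * Real.log (σ x y))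
          - 2 * ((Real.log (σ x y) + 1) * (μ x y - σ x y)) := by
    intro x _ y _
    nlinarith [IPFPD_nonneg (hμ x y) (hσ x y)]
  have hS1' : 0 ≤ ∑ x, ∑ y, (2 * (μ x y * Real.log (μ x y)) - 2 * (σ x y * Real.log (σ x y))
          - 2 * ((Real.log (σ x y) + 1) * (μ x y - σ x y))) :=
    Finset.sum_nonneg fun x hx => Finset.sum_nonneg (hS1 x hx)
  have hS2 : 0 ≤ ∑ x, ((n x - ∑ y, μ x y) * Real.log (n x - ∑ y, μ x y)
          - (n x - ∑ y, σ x y) * Real.log (n x - ∑ y, σ x y)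
          - (Real.log (n x - ∑ y, σ x y) + 1) * ((n x - ∑ y, μ x y) - (n x - ∑ y, σ x y))) :=
    Finset.sum_nonneg fun x _ => IPFPD_nonneg (hrμ x) (hrσ x)
  have hS3 : 0 ≤ ∑ y, ((m y - ∑ x, μ x y) * Real.log (m y - ∑ x, μ x y)
          - (m y - ∑ x, σ x y) * Real.log (m y - ∑ x, σ x y)
          - (Real.log (m y - ∑ x, σ x y) + 1) * ((m y - ∑ x, μ x y) - (m y - ∑ x, σ x y))) :=
    Finset.sum_nonneg fun y _ => IPFPD_nonneg (hcμ y) (hcσ y)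
  constructor
  · linarith
  · intro hne
    obtain ⟨x0, hx0⟩ := Function.ne_iff.1 hne
    obtain ⟨y0, hy0⟩ := Function.ne_iff.1 hx0
    have hpos : 0 < ∑ x, ∑ y, (2 * (μ x y * Real.log (μ x y)) - 2 * (σ x y * Real.log (σ x y))
          - 2 * ((Real.log (σ x y) + 1) * (μ x y - σ x y))) := by
      refine Finset.sum_pos' (fun x hx => Finset.sum_nonneg (hS1 x hx)) ⟨x0, Finset.mem_univ _, ?_⟩
      refine Finset.sum_pos' (hS1 x0 (Finset.mem_univ _)) ⟨y0, Finset.mem_univ _, ?_⟩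
      nlinarith [IPFPD_pos (hμ x0 y0) (hσ x0 y0) hy0]
    linarith

section conv
variable {X Y : Type*} [Fintype X] [Fintype Y] [Nonempty X] [Nonempty Y]

noncomputable def IPFPU (K : X → Y → ℝ) (n : X → ℝ) (v : Y → ℝ) : X → ℝ :=
  fun x => IPFPphi (∑ y, K x y * v y) (n x)

noncomputable def IPFPT (K : X → Y → ℝ) (n : X → ℝ) (m : Y → ℝ) (v : Y → ℝ) : Y → ℝ :=
  fun y => IPFPphi (∑ x, K x y * IPFPU K n v x) (m y)

variable {K : X → Y → ℝ} {n : X → ℝ} {m : Y → ℝ}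
  (hK : ∀ x y, 0 < K x y) (hn : ∀ x, 0 < n x) (hm : ∀ y, 0 < m y)

include hK in
lemma IPFPA_nonneg {v : Y → ℝ} (hv : ∀ y, 0 ≤ v y) (x : X) :
    0 ≤ ∑ y, K x y * v y :=
  Finset.sum_nonneg fun y _ => mul_nonneg (hK x y).le (hv y)

include hK hn in
lemma IPFPU_pos {v : Y → ℝ} (hv : ∀ y, 0 ≤ v y) (x : X) : 0 < IPFPU K n v x :=
  IPFPphi_pos (IPFPA_nonneg hK hv x) (hn x)

include hK hn in
lemma IPFPU_le_sqrt {v : Y → ℝ} (hv : ∀ y, 0 ≤ v y) (x : X) :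
    IPFPU K n v x ≤ Real.sqrt (n x) :=
  IPFPphi_le_sqrt (IPFPA_nonneg hK hv x) (hn x)

include hK hn in
lemma IPFPU_anti {v w : Y → ℝ} (hv : ∀ y, 0 ≤ v y) (hvw : ∀ y, v y ≤ w y) (x : X) :
    IPFPU K n w x ≤ IPFPU K n v x :=
  IPFPphi_anti (IPFPA_nonneg hK hv x)
    (Finset.sum_le_sum fun y _ => mul_le_mul_of_nonneg_left (hvw y) (hK x y).le) (hn x)

noncomputable def IPFPeps (K : X → Y → ℝ) (n : X → ℝ) (m : Y → ℝ) : Y → ℝ :=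
  fun y => IPFPphi (∑ x, K x y * Real.sqrt (n x)) (m y)

include hK hm in
lemma IPFPeps_pos (y : Y) : 0 < IPFPeps K n m y :=
  IPFPphi_pos (Finset.sum_nonneg fun x _ => mul_nonneg (hK x y).le (Real.sqrt_nonneg _)) (hm y)

include hK hn hm in
lemma IPFPT_le_sqrt {v : Y → ℝ} (hv : ∀ y, 0 ≤ v y) (y : Y) :
    IPFPT K n m v y ≤ Real.sqrt (m y) :=
  IPFPphi_le_sqrt (Finset.sum_nonneg fun x _ =>
    mul_nonneg (hK x y).le (IPFPU_pos hK hn hv x).le) (hm y)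

include hK hn hm in
lemma IPFPeps_le_IPFPT {v : Y → ℝ} (hv : ∀ y, 0 ≤ v y) (y : Y) :
    IPFPeps K n m y ≤ IPFPT K n m v y :=
  IPFPphi_anti (Finset.sum_nonneg fun x _ =>
      mul_nonneg (hK x y).le (IPFPU_pos hK hn hv x).le)
    (Finset.sum_le_sum fun x _ =>
      mul_le_mul_of_nonneg_left (IPFPU_le_sqrt hK hn hv x) (hK x y).le) (hm y)

include hK hm in
lemma IPFPeps_le_sqrt (y : Y) : IPFPeps K n m y ≤ Real.sqrt (m y) :=
  IPFPphi_le_sqrt (Finset.sum_nonneg fun x _ =>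
    mul_nonneg (hK x y).le (Real.sqrt_nonneg _)) (hm y)

include hK hn hm in
lemma IPFPT_mono {v w : Y → ℝ} (hv : ∀ y, 0 ≤ v y) (hvw : ∀ y, v y ≤ w y) (y : Y) :
    IPFPT K n m v y ≤ IPFPT K n m w y := by
  have hw : ∀ y, 0 ≤ w y := fun y => (hv y).trans (hvw y)
  exact IPFPphi_anti (Finset.sum_nonneg fun x _ =>
      mul_nonneg (hK x y).le (IPFPU_pos hK hn hw x).le)
    (Finset.sum_le_sum fun x _ =>
      mul_le_mul_of_nonneg_left (IPFPU_anti hK hn hv hvw x) (hK x y).le) (hm y)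

lemma IPFPT_cont : Continuous (IPFPT K n m) := by
  unfold IPFPT IPFPU
  refine continuous_pi fun y => ?_
  exact (IPFPphi_cont (m y)).comp <| continuous_finset_sum _ fun x _ =>
    continuous_const.mul <| (IPFPphi_cont (n x)).comp <|
      continuous_finset_sum _ fun y' _ => continuous_const.mul (continuous_apply y')

include hK hn hm in
lemma IPFPT_subhomog {v : Y → ℝ} (hv : ∀ y, 0 < v y) {l : ℝ} (hl0 : 0 < l) (hl1 : l < 1)
    (y : Y) : l * IPFPT K n m v y < IPFPT K n m (fun y => l * v y) y := by
  set A : X → ℝ := fun x => ∑ y, K x y * v y with hA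
  have hApos : ∀ x, 0 < A x := fun x =>
    Finset.sum_pos (fun y _ => mul_pos (hK x y) (hv y)) Finset.univ_nonempty
  have hu_pos : ∀ x, 0 < IPFPU K n v x := IPFPU_pos hK hn fun y => (hv y).le
  -- step 1 : U (l • v) x < U v x / l
  have h1 : ∀ x, IPFPU K n (fun y => l * v y) x < IPFPU K n v x / l := by
    intro x
    have hAl : ∑ y, K x y * (l * v y) = l * A x := by
      rw [hA, Finset.mul_sum]; exact Finset.sum_congr rfl fun y _ => by ring
    have heq := IPFPphi_eq (A := A x) (c := n x) (hApos x).le (hn x)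
    have hs : 0 < IPFPU K n v x / l := div_pos (hu_pos x) hl0
    refine lt_of_eq_of_lt (congrArg (fun t => IPFPphi t (n x)) hAl) ?_
    refine IPFPphi_lt (mul_nonneg hl0.le (hApos x).le) (hn x) hs.le ?_
    have h2 : IPFPU K n v x ^ 2 < (IPFPU K n v x / l)^2 := by
      rw [div_pow]
      rw [lt_div_iff₀ (by positivity)]
      have hl2 : l^2 < 1 := by nlinarith
      nlinarith [pow_pos (hu_pos x) 2]
    have h3 : l * A x * (IPFPU K n v x / l) = A x * IPFPU K n v x := by
      field_simp
    rw [h3]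
    have := hu_pos x
    unfold IPFPU at *
    nlinarith [heq]
  -- step 2
  have h2 : ∑ x, K x y * IPFPU K n (fun y => l * v y) x
      < (∑ x, K x y * IPFPU K n v x) / l := by
    rw [Finset.sum_div]
    refine Finset.sum_lt_sum_of_nonempty Finset.univ_nonempty fun x _ => ?_
    rw [mul_div_assoc]
    exact mul_lt_mul_of_pos_left (h1 x) (hK x y)
  -- step 3 and 4
  set B : ℝ := ∑ x, K x y * IPFPU K n v x with hBdef
  have hBpos : 0 < B := Finset.sum_pos (fun x _ => mul_pos (hK x y) (hu_pos x)) Finset.univ_nonempty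
  have h3 : IPFPphi (B / l) (m y) < IPFPT K n m (fun y => l * v y) y := by
    unfold IPFPT
    exact IPFPphi_anti_strict (Finset.sum_nonneg fun x _ =>
      mul_nonneg (hK x y).le (IPFPU_pos hK hn (fun y => mul_nonneg hl0.le (hv y).le) x).le)
      h2 (hm y)
  have h4 : l * IPFPT K n m v y ≤ IPFPphi (B / l) (m y) := by
    have hphi : IPFPT K n m v y = IPFPphi B (m y) := rfl
    have hppos : 0 < IPFPphi B (m y) := IPFPphi_pos hBpos.le (hm y)
    have heq := IPFPphi_eq (A := B) (c := m y) hBpos.le (hm y)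
    refine hphi ▸ IPFPle_phi (by positivity) (hm y) (by positivity) ?_
    have : B / l * (l * IPFPphi B (m y)) = B * IPFPphi B (m y) := by field_simp
    rw [this]
    have hl2 : l^2 ≤ 1 := by nlinarith
    nlinarith [pow_pos hppos 2]
  linarith
end conv

section conv2
variable {X Y : Type*} [Fintype X] [Fintype Y] [Nonempty X] [Nonempty Y]
variable {K : X → Y → ℝ} {n : X → ℝ} {m : Y → ℝ}
  (hK : ∀ x y, 0 < K x y) (hn : ∀ x, 0 < n x) (hm : ∀ y, 0 < m y)

include hK hn hm in
lemma IPFPT_convergence :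
    ∃ vstar : Y → ℝ, (∀ y, 0 < vstar y) ∧ IPFPT K n m vstar = vstar ∧
      ∀ v : ℕ → Y → ℝ, (∀ y, 0 ≤ v 0 y) → (∀ k, v (k+1) = IPFPT K n m (v k)) →
        ∀ y, Tendsto (fun k => v k y) atTop (𝓝 (vstar y)) := by
  classical
  set T := IPFPT K n m with hT
  set eps := IPFPeps K n m with hepsdef
  have heps_pos : ∀ y, 0 < eps y := fun y => IPFPeps_pos hK hm y
  set z : ℕ → Y → ℝ := fun k => T^[k] (fun y => Real.sqrt (m y)) with hzdef
  set w : ℕ → Y → ℝ := fun k => T^[k] eps with hwdef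
  have hz0 : z 0 = fun y => Real.sqrt (m y) := rfl
  have hw0 : w 0 = eps := rfl
  have hzsucc : ∀ k, z (k+1) = T (z k) := fun k => Function.iterate_succ_apply' T k _
  have hwsucc : ∀ k, w (k+1) = T (w k) := fun k => Function.iterate_succ_apply' T k _
  have hz_inv : ∀ k y, eps y ≤ z k y ∧ z k y ≤ Real.sqrt (m y) := by
    intro k
    induction k with
    | zero => intro y; rw [hz0]; exact ⟨IPFPeps_le_sqrt hK hm y, le_refl _⟩
    | succ k ih =>
      intro y
      rw [hzsucc]
      have h0 : ∀ y, 0 ≤ z k y := fun y => (heps_pos y).le.trans (ih y).1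
      exact ⟨IPFPeps_le_IPFPT hK hn hm h0 y, IPFPT_le_sqrt hK hn hm h0 y⟩
  have hw_inv : ∀ k y, eps y ≤ w k y ∧ w k y ≤ Real.sqrt (m y) := by
    intro k
    induction k with
    | zero => intro y; rw [hw0]; exact ⟨le_refl _, IPFPeps_le_sqrt hK hm y⟩
    | succ k ih =>
      intro y
      rw [hwsucc]
      have h0 : ∀ y, 0 ≤ w k y := fun y => (heps_pos y).le.trans (ih y).1
      exact ⟨IPFPeps_le_IPFPT hK hn hm h0 y, IPFPT_le_sqrt hK hn hm h0 y⟩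
  have hz_anti : ∀ k y, z (k+1) y ≤ z k y := by
    intro k
    induction k with
    | zero =>
      intro y; rw [hzsucc, hz0]
      exact IPFPT_le_sqrt hK hn hm (fun y => Real.sqrt_nonneg _) y
    | succ k ih =>
      intro y
      rw [hzsucc (k+1)]
      conv_rhs => rw [hzsucc k]
      exact IPFPT_mono hK hn hm (fun y => (heps_pos y).le.trans (hz_inv (k+1) y).1) ih y
  have hw_mono : ∀ k y, w k y ≤ w (k+1) y := by
    intro k
    induction k with
    | zero =>
      intro y; rw [hwsucc, hw0]
      exact IPFPeps_le_IPFPT hK hn hm (fun y => (heps_pos y).le) y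
    | succ k ih =>
      intro y
      rw [hwsucc (k+1)]
      conv_lhs => rw [hwsucc k]
      exact IPFPT_mono hK hn hm (fun y => (heps_pos y).le.trans (hw_inv k y).1) ih y
  have hwz : ∀ k y, w k y ≤ z k y := by
    intro k
    induction k with
    | zero => intro y; rw [hz0, hw0]; exact IPFPeps_le_sqrt hK hm y
    | succ k ih =>
      intro y
      rw [hzsucc, hwsucc]
      exact IPFPT_mono hK hn hm (fun y => (heps_pos y).le.trans (hw_inv k y).1) ih y
  -- limits
  set zs : Y → ℝ := fun y => ⨅ k, z k y with hzsdef
  set ws : Y → ℝ := fun y => ⨆ k, w k y with hwsdef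
  have hz_tend : ∀ y, Tendsto (fun k => z k y) atTop (𝓝 (zs y)) := fun y =>
    tendsto_atTop_ciInf (antitone_nat_of_succ_le fun k => hz_anti k y)
      ⟨0, by rintro r ⟨k, rfl⟩; exact ((heps_pos y).le.trans (hz_inv k y).1)⟩
  have hw_tend : ∀ y, Tendsto (fun k => w k y) atTop (𝓝 (ws y)) := fun y =>
    tendsto_atTop_ciSup (monotone_nat_of_le_succ fun k => hw_mono k y)
      ⟨Real.sqrt (m y), by rintro r ⟨k, rfl⟩; exact (hw_inv k y).2⟩
  have hz_pi : Tendsto z atTop (𝓝 zs) := tendsto_pi_nhds.2 hz_tend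
  have hw_pi : Tendsto w atTop (𝓝 ws) := tendsto_pi_nhds.2 hw_tend
  have hfixz : T zs = zs := by
    refine tendsto_nhds_unique ((IPFPT_cont.tendsto zs).comp hz_pi) ?_
    exact (hz_pi.comp (tendsto_add_atTop_nat 1)).congr fun k => (hzsucc k)
  have hfixw : T ws = ws := by
    refine tendsto_nhds_unique ((IPFPT_cont.tendsto ws).comp hw_pi) ?_
    exact (hw_pi.comp (tendsto_add_atTop_nat 1)).congr fun k => (hwsucc k)
  have hzs_lb : ∀ y, eps y ≤ zs y := fun y => le_ciInf fun k => (hz_inv k y).1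
  have hws_lb : ∀ y, eps y ≤ ws y := fun y =>
    le_ciSup_of_le ⟨Real.sqrt (m y), by rintro r ⟨k, rfl⟩; exact (hw_inv k y).2⟩ 0 (by rw [hw0])
  have hzs_pos : ∀ y, 0 < zs y := fun y => (heps_pos y).trans_le (hzs_lb y)
  have hws_pos : ∀ y, 0 < ws y := fun y => (heps_pos y).trans_le (hws_lb y)
  have hws_le_zs : ∀ y, ws y ≤ zs y := fun y =>
    le_of_tendsto_of_tendsto' (hw_tend y) (hz_tend y) fun k => hwz k y
  -- uniqueness : ws = zs
  have heqwz : ws = zs := by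
    obtain ⟨y0, -, hy0⟩ := Finset.exists_min_image Finset.univ
      (fun y => ws y / zs y) Finset.univ_nonempty
    set l := ws y0 / zs y0 with hldef
    have hl_pos : 0 < l := div_pos (hws_pos y0) (hzs_pos y0)
    rcases lt_or_ge l 1 with hl1 | hl1
    · exfalso
      have hlv : ∀ y, l * zs y ≤ ws y := fun y =>
        (le_div_iff₀ (hzs_pos y)).1 (hy0 y (Finset.mem_univ y))
      have hkey := IPFPT_subhomog hK hn hm hzs_pos hl_pos hl1 y0
      rw [← hT, hfixz] at hkey
      have hmono := IPFPT_mono hK hn hm (fun y => (mul_pos hl_pos (hzs_pos y)).le) hlv y0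
      rw [← hT, hfixw] at hmono
      have hcan : l * zs y0 = ws y0 := div_mul_cancel₀ (ws y0) (hzs_pos y0).ne'
      linarith
    · funext y
      exact le_antisymm (hws_le_zs y)
        ((one_le_div (hzs_pos y)).1 (hl1.trans (hy0 y (Finset.mem_univ y))))
  refine ⟨zs, hzs_pos, hfixz, ?_⟩
  intro v hv0 hvsucc
  have hsand : ∀ k y, w k y ≤ v (k+1) y ∧ v (k+1) y ≤ z k y := by
    intro k
    induction k with
    | zero =>
      intro y
      rw [hvsucc 0, hw0, hz0]
      exact ⟨IPFPeps_le_IPFPT hK hn hm hv0 y, IPFPT_le_sqrt hK hn hm hv0 y⟩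
    | succ k ih =>
      intro y
      rw [hvsucc (k+1), hwsucc k, hzsucc k]
      have hwk0 : ∀ y, 0 ≤ w k y := fun y => (heps_pos y).le.trans (hw_inv k y).1
      have hv0' : ∀ y, 0 ≤ v (k+1) y := fun y => (hwk0 y).trans (ih y).1
      exact ⟨IPFPT_mono hK hn hm hwk0 (fun y => (ih y).1) y,
        IPFPT_mono hK hn hm hv0' (fun y => (ih y).2) y⟩
  intro y
  have h1 : Tendsto (fun k => v (k+1) y) atTop (𝓝 (zs y)) := by
    refine tendsto_of_tendsto_of_tendsto_of_le_of_le ?_ (hz_tend y)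
      (fun k => (hsand k y).1) (fun k => (hsand k y).2)
    simpa [heqwz] using hw_tend y
  exact (tendsto_add_atTop_iff_nat 1).1 h1
end conv2

end IPFPaux

/-- **Convergence of the IPFP algorithm in the Choo–Siow model (Theorem 3).**
The alternating updates of the masses of singles converge to strictly positive
limits that solve the margin equations, and the induced matching is the unique
maximizer of the Choo–Siow social gain over feasible matchings. -/
theorem ipfp_converges
    (n : X → ℝ) (m : Y → ℝ) (hn : ∀ x, 0 < n x) (hm : ∀ y, 0 < m y)
    (Φ : X → Y → ℝ)
    -- `a k x = μ_x0^{(2k+1)}` and `b k y = μ_0y^{(2k)}`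
    (a : ℕ → X → ℝ) (b : ℕ → Y → ℝ)
    (hb0 : ∀ y, 0 < b 0 y)
    (ha : ∀ k x, a k x =
      (Real.sqrt (n x + (∑ y, Real.exp (Φ x y / 2) * Real.sqrt (b k y)) ^ 2 / 4) -
        (∑ y, Real.exp (Φ x y / 2) * Real.sqrt (b k y)) / 2) ^ 2)
    (hb : ∀ k y, b (k + 1) y =
      (Real.sqrt (m y + (∑ x, Real.exp (Φ x y / 2) * Real.sqrt (a k x)) ^ 2 / 4) -
        (∑ x, Real.exp (Φ x y / 2) * Real.sqrt (a k x)) / 2) ^ 2) :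
    ∃ (as : X → ℝ) (bs : Y → ℝ),
      (∀ x, 0 < as x) ∧ (∀ y, 0 < bs y) ∧
      -- convergence of the two subsequences of iterates
      (∀ x, Tendsto (fun k => a k x) atTop (𝓝 (as x))) ∧
      (∀ y, Tendsto (fun k => b (k + 1) y) atTop (𝓝 (bs y))) ∧
      -- the limits solve the margin equations
      (∀ x, as x + Real.sqrt (as x) *
        (∑ y, Real.exp (Φ x y / 2) * Real.sqrt (bs y)) = n x) ∧
      (∀ y, bs y + Real.sqrt (bs y) *
        (∑ x, Real.exp (Φ x y / 2) * Real.sqrt (as x)) = m y) ∧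
      -- the induced matching is the unique maximizer of the social gain
      (let μs : X → Y → ℝ := fun x y => Real.exp (Φ x y / 2) * Real.sqrt (as x * bs y)
       Feasible n m μs ∧
       (∀ μ : X → Y → ℝ, Feasible n m μ → CSGain n m Φ μ ≤ CSGain n m Φ μs) ∧
       (∀ μ : X → Y → ℝ, Feasible n m μ →
        (∀ μ' : X → Y → ℝ, Feasible n m μ' → CSGain n m Φ μ' ≤ CSGain n m Φ μ) →
        μ = μs)) := by
  classical
  have hK : ∀ x y, 0 < Real.exp (Φ x y / 2) := fun x y => Real.exp_pos _
  set Kf : X → Y → ℝ := fun x y => Real.exp (Φ x y / 2) with hKf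
  have hKpos : ∀ x y, 0 < Kf x y := fun x y => Real.exp_pos _
  -- positivity of the iterates b
  have hbpos : ∀ k y, 0 < b k y := by
    intro k
    induction k with
    | zero => exact hb0
    | succ k ih =>
      intro y
      rw [hb k y]
      have hB : 0 ≤ ∑ x, Real.exp (Φ x y / 2) * Real.sqrt (a k x) :=
        Finset.sum_nonneg fun x _ => by positivity
      exact pow_pos (IPFPphi_pos hB (hm y)) 2
  -- the sqrt iterates satisfy the IPFPT recursion
  have hAnn : ∀ k x, 0 ≤ ∑ y, Real.exp (Φ x y / 2) * Real.sqrt (b k y) :=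
    fun k x => Finset.sum_nonneg fun y _ => by positivity
  have hu : ∀ k x, Real.sqrt (a k x) = IPFPU Kf n (fun y => Real.sqrt (b k y)) x := by
    intro k x
    rw [ha k x]
    exact Real.sqrt_sq (IPFPphi_pos (hAnn k x) (hn x)).le
  have hvsucc : ∀ k, (fun y => Real.sqrt (b (k+1) y)) =
      IPFPT Kf n m (fun y => Real.sqrt (b k y)) := by
    intro k
    funext y
    rw [hb k y]
    have hB : 0 ≤ ∑ x, Real.exp (Φ x y / 2) * Real.sqrt (a k x) :=
      Finset.sum_nonneg fun x _ => by positivity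
    have hBeq : ∑ x, Real.exp (Φ x y / 2) * Real.sqrt (a k x)
        = ∑ x, Kf x y * IPFPU Kf n (fun y => Real.sqrt (b k y)) x :=
      Finset.sum_congr rfl fun x _ => by rw [hu k x]
    show Real.sqrt ((IPFPphi (∑ x, Real.exp (Φ x y / 2) * Real.sqrt (a k x)) (m y))^2) = _
    rw [Real.sqrt_sq (IPFPphi_pos hB (hm y)).le, hBeq]
    rfl
  -- convergence
  obtain ⟨vstar, hvpos, hfix, hconv⟩ := IPFPT_convergence (K := Kf) (n := n) (m := m) hKpos hn hm
  have hvtend : ∀ y, Tendsto (fun k => Real.sqrt (b k y)) atTop (𝓝 (vstar y)) :=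
    hconv (fun k y => Real.sqrt (b k y)) (fun y => Real.sqrt_nonneg _) hvsucc
  set us : X → ℝ := IPFPU Kf n vstar with hus
  have huspos : ∀ x, 0 < us x := IPFPU_pos hKpos hn (fun y => (hvpos y).le)
  refine ⟨fun x => us x ^ 2, fun y => vstar y ^ 2, fun x => pow_pos (huspos x) 2,
    fun y => pow_pos (hvpos y) 2, ?_, ?_, ?_, ?_, ?_⟩
  · -- convergence of a
    intro x
    have hcontF : Continuous fun w : Y → ℝ => (IPFPU Kf n w x) ^ 2 := by
      unfold IPFPU
      exact ((IPFPphi_cont (n x)).comp (continuous_finset_sum _ fun y _ =>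
        continuous_const.mul (continuous_apply y))).pow 2
    have hpi : Tendsto (fun k => (fun y => Real.sqrt (b k y))) atTop (𝓝 vstar) :=
      tendsto_pi_nhds.2 hvtend
    have := (hcontF.tendsto vstar).comp hpi
    refine this.congr fun k => ?_
    have : a k x = Real.sqrt (a k x) ^ 2 := by
      rw [Real.sq_sqrt]
      rw [ha k x]; positivity
    rw [hu k x] at this
    exact this.symm
  · -- convergence of b
    intro y
    have h1 : Tendsto (fun k => Real.sqrt (b (k+1) y)) atTop (𝓝 (vstar y)) :=
      (hvtend y).comp (tendsto_add_atTop_nat 1)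
    have h2 := h1.pow 2
    exact h2.congr fun k => Real.sq_sqrt (hbpos (k+1) y).le
  · -- first margin equation
    intro x
    show us x ^ 2 + Real.sqrt (us x ^ 2) *
      (∑ y, Real.exp (Φ x y / 2) * Real.sqrt (vstar y ^ 2)) = n x
    have hsq : Real.sqrt (us x ^ 2) = us x := Real.sqrt_sq (huspos x).le
    have hsum : ∑ y, Real.exp (Φ x y / 2) * Real.sqrt (vstar y ^ 2)
        = ∑ y, Kf x y * vstar y :=
      Finset.sum_congr rfl fun y _ => by rw [Real.sqrt_sq (hvpos y).le]
    rw [hsq, hsum]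
    have heq := IPFPphi_eq (A := ∑ y, Kf x y * vstar y) (c := n x)
      (Finset.sum_nonneg fun y _ => mul_nonneg (hKpos x y).le (hvpos y).le) (hn x)
    have : us x = IPFPphi (∑ y, Kf x y * vstar y) (n x) := rfl
    rw [this]
    linear_combination heq
  · -- second margin equation
    intro y
    show vstar y ^ 2 + Real.sqrt (vstar y ^ 2) *
      (∑ x, Real.exp (Φ x y / 2) * Real.sqrt (us x ^ 2)) = m y
    have hsq : Real.sqrt (vstar y ^ 2) = vstar y := Real.sqrt_sq (hvpos y).le
    have hsum : ∑ x, Real.exp (Φ x y / 2) * Real.sqrt (us x ^ 2)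
        = ∑ x, Kf x y * us x :=
      Finset.sum_congr rfl fun x _ => by rw [Real.sqrt_sq (huspos x).le]
    rw [hsq, hsum]
    have hfy : IPFPphi (∑ x, Kf x y * us x) (m y) = vstar y := congrFun hfix y
    have heq := IPFPphi_eq (A := ∑ x, Kf x y * us x) (c := m y)
      (Finset.sum_nonneg fun x _ => mul_nonneg (hKpos x y).le (huspos x).le) (hm y)
    rw [hfy] at heq
    linear_combination heq
  · -- optimality
    intro μs
    have hμs : ∀ x y, μs x y = Kf x y * (us x * vstar y) := by
      intro x y
      show Real.exp (Φ x y / 2) * Real.sqrt (us x ^ 2 * vstar y ^ 2) = _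
      rw [Real.sqrt_mul (sq_nonneg _), Real.sqrt_sq (huspos x).le,
        Real.sqrt_sq (hvpos y).le]
    have hμspos : ∀ x y, 0 < μs x y := by
      intro x y; rw [hμs x y]
      exact mul_pos (hKpos x y) (mul_pos (huspos x) (hvpos y))
    have hrow : ∀ x, ∑ y, μs x y = n x - us x ^ 2 := by
      intro x
      have hA : 0 ≤ ∑ y, Kf x y * vstar y :=
        Finset.sum_nonneg fun y _ => mul_nonneg (hKpos x y).le (hvpos y).le
      have heq := IPFPphi_eq (A := ∑ y, Kf x y * vstar y) (c := n x) hA (hn x)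
      have hux : us x = IPFPphi (∑ y, Kf x y * vstar y) (n x) := rfl
      have hsum : ∑ y, μs x y = us x * ∑ y, Kf x y * vstar y := by
        rw [Finset.mul_sum]
        exact Finset.sum_congr rfl fun y _ => by rw [hμs x y]; ring
      rw [hsum, hux]
      linear_combination heq
    have hcol : ∀ y, ∑ x, μs x y = m y - vstar y ^ 2 := by
      intro y
      have hB : 0 ≤ ∑ x, Kf x y * us x :=
        Finset.sum_nonneg fun x _ => mul_nonneg (hKpos x y).le (huspos x).le
      have heq := IPFPphi_eq (A := ∑ x, Kf x y * us x) (c := m y) hB (hm y)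
      have hfy : IPFPphi (∑ x, Kf x y * us x) (m y) = vstar y := congrFun hfix y
      rw [hfy] at heq
      have hsum : ∑ x, μs x y = vstar y * ∑ x, Kf x y * us x := by
        rw [Finset.mul_sum]
        exact Finset.sum_congr rfl fun x _ => by rw [hμs x y]; ring
      rw [hsum]
      linear_combination heq
    have hrpos : ∀ x, 0 < n x - ∑ y, μs x y := by
      intro x; rw [hrow x]; have := pow_pos (huspos x) 2; linarith
    have hcpos : ∀ y, 0 < m y - ∑ x, μs x y := by
      intro y; rw [hcol y]; have := pow_pos (hvpos y) 2; linarith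
    have hcondμs : (∀ x y, 0 < μs x y) ∧ (∀ x, 0 < n x - ∑ y, μs x y) ∧
        (∀ y, 0 < m y - ∑ x, μs x y) := ⟨hμspos, hrpos, hcpos⟩
    have hlog : ∀ x y, 2 * Real.log (μs x y) =
        Φ x y + Real.log (n x - ∑ y', μs x y') + Real.log (m y - ∑ x', μs x' y) := by
      intro x y
      rw [hrow x, hcol y, sub_sub_cancel, sub_sub_cancel, hμs x y]
      have h1 : Kf x y * (us x * vstar y) = Real.exp (Φ x y / 2) * (us x * vstar y) := rfl
      rw [h1, Real.log_mul (Real.exp_ne_zero _) (mul_pos (huspos x) (hvpos y)).ne',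
        Real.log_exp, Real.log_mul (huspos x).ne' (hvpos y).ne',
        Real.log_pow, Real.log_pow]
      push_cast
      ring
    have hECS : ∀ μ : X → Y → ℝ, ((∀ x y, 0 < μ x y) ∧ (∀ x, 0 < n x - ∑ y, μ x y) ∧
        (∀ y, 0 < m y - ∑ x, μ x y)) →
        CSGain n m Φ μ = ((IPFPG n m Φ μ : ℝ) : EReal) := by
      intro μ hcond
      unfold CSGain ECS IPFPG
      rw [if_pos hcond, ← EReal.coe_add]
    have hECSbot : ∀ μ : X → Y → ℝ, ¬((∀ x y, 0 < μ x y) ∧ (∀ x, 0 < n x - ∑ y, μ x y) ∧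
        (∀ y, 0 < m y - ∑ x, μ x y)) → CSGain n m Φ μ = ⊥ := by
      intro μ hcond
      unfold CSGain ECS
      rw [if_neg hcond, EReal.add_bot]
    have hmain : ∀ μ : X → Y → ℝ, ((∀ x y, 0 < μ x y) ∧ (∀ x, 0 < n x - ∑ y, μ x y) ∧
        (∀ y, 0 < m y - ∑ x, μ x y)) →
        IPFPG n m Φ μ ≤ IPFPG n m Φ μs ∧ (μ ≠ μs → IPFPG n m Φ μ < IPFPG n m Φ μs) :=
      fun μ h => IPFPG_main n m Φ μ μs hn hm h.1 hμspos h.2.1 h.2.2 hrpos hcpos hlog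
    refine ⟨⟨fun x y => (hμspos x y).le, ?_, ?_⟩, ?_, ?_⟩
    · intro x; rw [hrow x]; have := pow_pos (huspos x) 2; linarith
    · intro y; rw [hcol y]; have := pow_pos (hvpos y) 2; linarith
    · -- maximality
      intro μ hfeas
      by_cases hcond : (∀ x y, 0 < μ x y) ∧ (∀ x, 0 < n x - ∑ y, μ x y) ∧
        (∀ y, 0 < m y - ∑ x, μ x y)
      · rw [hECS μ hcond, hECS μs hcondμs]
        exact_mod_cast (hmain μ hcond).1
      · rw [hECSbot μ hcond]
        exact bot_le
    · -- uniqueness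
      intro μ hfeas hmax
      have hle := hmax μs ⟨fun x y => (hμspos x y).le,
        fun x => by rw [hrow x]; have := pow_pos (huspos x) 2; linarith,
        fun y => by rw [hcol y]; have := pow_pos (hvpos y) 2; linarith⟩
      by_cases hcond : (∀ x y, 0 < μ x y) ∧ (∀ x, 0 < n x - ∑ y, μ x y) ∧
        (∀ y, 0 < m y - ∑ x, μ x y)
      · by_contra hne
        rw [hECS μ hcond, hECS μs hcondμs] at hle
        have hlt := (hmain μ hcond).2 hne
        have := EReal.coe_le_coe_iff.1 hle
        linarith
      · rw [hECSbot μ hcond, hECS μs hcondμs] at hle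
        exact absurd hle (EReal.bot_lt_coe _).not_ge

end
end

section
/- Let 𝒴 be a finite nonempty set, let {𝒴(n)}_{n∈𝒩} be a partition of 𝒴 into nonempty sets indexed by a finite set 𝒩, and let λ : 𝒩 → ℝ with 0 < λ_n ≤ 1 for every n. Define the nested logit Emax G : ℝ^{𝒴} → ℝ by G(U) = log( 1 + Σ_{n∈𝒩} ( Σ_{y∈𝒴(n)} exp(U_y/λ_n) )^{λ_n} ). Then for every μ : 𝒴 → ℝ with μ_y > 0 for all y and μ_0 := 1 − Σ_{y∈𝒴} μ_y > 0, writing μ_n = Σ_{y∈𝒴(n)} μ_y, the Legendre–Fenchel transform satisfies sup_{U : 𝒴 → ℝ}( Σ_{y∈𝒴} μ_y U_y − G(U) ) = μ_0 log μ_0 + Σ_{n∈𝒩} ( λ_n Σ_{y∈𝒴(n)} μ_y log μ_y + (1 − λ_n) μ_n log μ_n ), and the supremum is attained at the vector U given by U_y = λ_n log(μ_y/μ_0) + (1 − λ_n) log(μ_n/μ_0) for y ∈ 𝒴(n); moreover at this U the gradient of G equals μ. -/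
set_option linter.unusedSectionVars false
set_option linter.unusedVariables false


noncomputable section
open Real Finset

variable {Y N : Type*} [Fintype Y] [Nonempty Y] [DecidableEq Y]
  [Fintype N] [DecidableEq N]

/-- The nested logit Emax operator
`G(U) = log(1 + Σ_n (Σ_{y ∈ 𝒴(n)} exp(U_y/λ_n))^{λ_n})`,
where the nests are the fibers of `nest : Y → N`. -/
def Gnested (nest : Y → N) (lam : N → ℝ) (U : Y → ℝ) : ℝ :=
  Real.log (1 + ∑ nn : N,
    (∑ y ∈ Finset.univ.filter (fun y => nest y = nn),
      Real.exp (U y / lam nn)) ^ (lam nn))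

def Ustar (nest : Y → N) (lam : N → ℝ) (μ : Y → ℝ) : Y → ℝ := fun y =>
  lam (nest y) * Real.log (μ y / (1 - ∑ y', μ y')) +
    (1 - lam (nest y)) *
      Real.log ((∑ y' ∈ Finset.univ.filter (fun y' => nest y' = nest y), μ y') /
        (1 - ∑ y', μ y'))

variable (nest : Y → N) (lam : N → ℝ) (μ : Y → ℝ)

/-- fiber mass -/
def μn (nn : N) : ℝ := ∑ y ∈ Finset.univ.filter (fun y => nest y = nn), μ y

variable {nest lam μ}
variable (hnest : Function.Surjective nest)
  (hlam : ∀ nn, 0 < lam nn) (hlam1 : ∀ nn, lam nn ≤ 1)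
  (hμ : ∀ y, 0 < μ y) (hμ0 : 0 < 1 - ∑ y, μ y)

section
include hnest hμ

lemma μn_pos (nn : N) : 0 < μn nest μ nn := by
  obtain ⟨y, hy⟩ := hnest nn
  exact Finset.sum_pos' (fun y _ => (hμ y).le)
    ⟨y, by simp [hy], hμ y⟩

end

lemma sum_μn : ∑ nn, μn nest μ nn = ∑ y, μ y :=
  Finset.sum_fiberwise _ _ _

section
include hnest hlam hμ hμ0

lemma exp_Ustar (y : Y) :
    Real.exp (Ustar nest lam μ y / lam (nest y)) =
      (μ y / (1 - ∑ y', μ y')) *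
        (μn nest μ (nest y) / (1 - ∑ y', μ y')) ^ ((1 - lam (nest y)) / lam (nest y)) := by
  set μ0 := 1 - ∑ y', μ y'
  have hl := hlam (nest y)
  have h1 : Ustar nest lam μ y / lam (nest y) =
      Real.log (μ y / μ0) + ((1 - lam (nest y)) / lam (nest y)) * Real.log (μn nest μ (nest y) / μ0) := by
    rw [Ustar]
    show (lam (nest y) * Real.log (μ y / μ0) + (1 - lam (nest y)) * Real.log (μn nest μ (nest y) / μ0)) / lam (nest y) = _
    field_simp
  rw [h1, Real.exp_add, Real.exp_log (div_pos (hμ y) hμ0), Real.rpow_def_of_pos (by exact div_pos (μn_pos hnest hμ _) hμ0)]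
  ring_nf

lemma sum_exp_Ustar (nn : N) :
    (∑ y ∈ Finset.univ.filter (fun y => nest y = nn),
      Real.exp (Ustar nest lam μ y / lam nn)) =
      (μn nest μ nn / (1 - ∑ y', μ y')) ^ (1 / lam nn) := by
  set μ0 := 1 - ∑ y', μ y' with hμ0def
  have h1 : ∀ y ∈ Finset.univ.filter (fun y => nest y = nn),
      Real.exp (Ustar nest lam μ y / lam nn) =
        (μ y / μ0) * (μn nest μ nn / μ0) ^ ((1 - lam nn) / lam nn) := by
    intro y hy
    rw [Finset.mem_filter] at hy
    rw [← hy.2, exp_Ustar hnest hlam hμ hμ0]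
  rw [Finset.sum_congr rfl h1, ← Finset.sum_mul, ← Finset.sum_div]
  have hpos : 0 < μn nest μ nn / μ0 := div_pos (μn_pos hnest hμ _) hμ0
  have : (∑ y ∈ Finset.univ.filter (fun y => nest y = nn), μ y) / μ0 = (μn nest μ nn / μ0) ^ (1:ℝ) := by
    rw [Real.rpow_one]; rfl
  rw [this, ← Real.rpow_add hpos]
  congr 1
  have hl := (hlam nn).ne'
  field_simp
  ring

lemma Spow (nn : N) :
    ((μn nest μ nn / (1 - ∑ y', μ y')) ^ (1 / lam nn)) ^ (lam nn) =
      μn nest μ nn / (1 - ∑ y', μ y') := by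
  have hpos : (0:ℝ) ≤ μn nest μ nn / (1 - ∑ y', μ y') := (div_pos (μn_pos hnest hμ _) hμ0).le
  rw [← Real.rpow_mul hpos, one_div, inv_mul_cancel₀ (hlam nn).ne', Real.rpow_one]

lemma Fval :
    (1 + ∑ nn : N, (∑ y ∈ Finset.univ.filter (fun y => nest y = nn),
      Real.exp (Ustar nest lam μ y / lam nn)) ^ (lam nn)) = (1 - ∑ y, μ y)⁻¹ := by
  have h1 : ∀ nn ∈ (univ : Finset N), (∑ y ∈ Finset.univ.filter (fun y => nest y = nn),
      Real.exp (Ustar nest lam μ y / lam nn)) ^ (lam nn) = μn nest μ nn / (1 - ∑ y, μ y) := by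
    intro nn _
    rw [sum_exp_Ustar hnest hlam hμ hμ0, Spow hnest hlam hμ hμ0]
  rw [Finset.sum_congr rfl h1, ← Finset.sum_div, sum_μn]
  field_simp
  ring

lemma G_Ustar : Gnested nest lam (Ustar nest lam μ) = -Real.log (1 - ∑ y, μ y) := by
  rw [Gnested, Fval hnest hlam hμ hμ0, Real.log_inv]

end

lemma gibbs_ineq {ι : Type*} (s : Finset ι) (p a : ι → ℝ)
    (hp : ∀ i ∈ s, 0 < p i) (ha : ∀ i ∈ s, 0 < a i)
    (hsum : ∑ i ∈ s, p i = 1) :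
    ∑ i ∈ s, p i * Real.log (a i / p i) ≤ Real.log (∑ i ∈ s, a i) := by
  have hne : s.Nonempty := by
    rcases s.eq_empty_or_nonempty with h | h
    · simp [h] at hsum
    · exact h
  have hA : 0 < ∑ i ∈ s, a i := Finset.sum_pos ha hne
  set A := ∑ i ∈ s, a i with hAdef
  have key : ∀ i ∈ s, p i * (Real.log (a i / p i) - Real.log A) ≤ a i / A - p i := by
    intro i hi
    have hpi := hp i hi
    have hai := ha i hi
    have h1 : Real.log (a i / p i) - Real.log A = Real.log (a i / (p i * A)) := by
      rw [Real.log_div hai.ne' hpi.ne',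
        Real.log_div hai.ne' (by positivity : (p i * A) ≠ 0),
        Real.log_mul hpi.ne' hA.ne']
      ring
    rw [h1]
    have h2 := Real.log_le_sub_one_of_pos (show 0 < a i / (p i * A) by positivity)
    calc p i * Real.log (a i / (p i * A)) ≤ p i * (a i / (p i * A) - 1) :=
          mul_le_mul_of_nonneg_left h2 hpi.le
      _ = a i / A - p i := by field_simp
  have h3 : ∑ i ∈ s, p i * (Real.log (a i / p i) - Real.log A) ≤
      ∑ i ∈ s, (a i / A - p i) := Finset.sum_le_sum key
  have h4 : ∑ i ∈ s, (a i / A - p i) = 0 := by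
    rw [Finset.sum_sub_distrib, hsum, ← Finset.sum_div]
    field_simp
    simp [hAdef]
  have h5 : ∑ i ∈ s, p i * (Real.log (a i / p i) - Real.log A) =
      (∑ i ∈ s, p i * Real.log (a i / p i)) - Real.log A := by
    simp only [mul_sub]
    rw [Finset.sum_sub_distrib, ← Finset.sum_mul, hsum, one_mul]
  linarith [h3, h4, h5]

section
include hnest hlam hμ hμ0

lemma val_Ustar :
    (∑ y, μ y * Ustar nest lam μ y) - Gnested nest lam (Ustar nest lam μ) =
      (1 - ∑ y, μ y) * Real.log (1 - ∑ y, μ y) +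
        ∑ nn : N, (lam nn *
            ∑ y ∈ Finset.univ.filter (fun y => nest y = nn), μ y * Real.log (μ y) +
          (1 - lam nn) * (μn nest μ nn) * Real.log (μn nest μ nn)) := by
  set μ0 := 1 - ∑ y, μ y with hμ0def
  have hfib : ∀ nn : N, ∑ y ∈ Finset.univ.filter (fun y => nest y = nn), μ y * Ustar nest lam μ y =
      lam nn * (∑ y ∈ Finset.univ.filter (fun y => nest y = nn), μ y * Real.log (μ y)) +
        (1 - lam nn) * μn nest μ nn * Real.log (μn nest μ nn) - μn nest μ nn * Real.log μ0 := by
    intro nn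
    have h1 : ∀ y ∈ Finset.univ.filter (fun y => nest y = nn),
        μ y * Ustar nest lam μ y =
          lam nn * (μ y * Real.log (μ y)) +
            ((1 - lam nn) * Real.log (μn nest μ nn) - Real.log μ0) * μ y := by
      intro y hy
      rw [Finset.mem_filter] at hy
      rw [Ustar]
      show μ y * (lam (nest y) * Real.log (μ y / μ0) +
        (1 - lam (nest y)) * Real.log (μn nest μ (nest y) / μ0)) = _
      rw [hy.2, Real.log_div (hμ y).ne' hμ0.ne',
        Real.log_div (μn_pos hnest hμ nn).ne' hμ0.ne']
      ring
    rw [Finset.sum_congr rfl h1, Finset.sum_add_distrib, ← Finset.mul_sum, ← Finset.mul_sum]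
    show _ = _
    rw [show (∑ y ∈ Finset.univ.filter (fun y => nest y = nn), μ y) = μn nest μ nn from rfl]
    ring
  have hsplit : ∑ y, μ y * Ustar nest lam μ y =
      ∑ nn : N, ∑ y ∈ Finset.univ.filter (fun y => nest y = nn), μ y * Ustar nest lam μ y :=
    (Finset.sum_fiberwise _ _ _).symm
  rw [hsplit, Finset.sum_congr rfl (fun nn _ => hfib nn), G_Ustar hnest hlam hμ hμ0]
  rw [Finset.sum_sub_distrib, ← Finset.sum_mul, sum_μn]
  ring

end
section
include hnest hlam hμ hμ0

lemma bound_Ustar (U : Y → ℝ) :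
    (∑ y, μ y * U y) - Gnested nest lam U ≤
      (1 - ∑ y, μ y) * Real.log (1 - ∑ y, μ y) +
        ∑ nn : N, (lam nn *
            ∑ y ∈ Finset.univ.filter (fun y => nest y = nn), μ y * Real.log (μ y) +
          (1 - lam nn) * (μn nest μ nn) * Real.log (μn nest μ nn)) := by
  set μ0 := 1 - ∑ y, μ y with hμ0def
  set S : N → ℝ := fun nn => ∑ y ∈ Finset.univ.filter (fun y => nest y = nn),
    Real.exp (U y / lam nn) with hSdef
  have hfibne : ∀ nn : N, (Finset.univ.filter (fun y => nest y = nn)).Nonempty := by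
    intro nn
    obtain ⟨y, hy⟩ := hnest nn
    exact ⟨y, by simp [hy]⟩
  have hS : ∀ nn, 0 < S nn := fun nn =>
    Finset.sum_pos (fun y _ => Real.exp_pos _) (hfibne nn)
  have hμnpos : ∀ nn, 0 < μn nest μ nn := μn_pos hnest hμ
  -- inner Gibbs
  have inner : ∀ nn : N,
      (∑ y ∈ Finset.univ.filter (fun y => nest y = nn), μ y * U y) -
        (lam nn * ∑ y ∈ Finset.univ.filter (fun y => nest y = nn), μ y * Real.log (μ y) +
          (1 - lam nn) * (μn nest μ nn) * Real.log (μn nest μ nn)) ≤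
        μn nest μ nn * (lam nn * Real.log (S nn) - Real.log (μn nest μ nn)) := by
    intro nn
    have hl := hlam nn
    have hμn := hμnpos nn
    have h := gibbs_ineq (Finset.univ.filter (fun y => nest y = nn))
      (fun y => μ y / μn nest μ nn) (fun y => Real.exp (U y / lam nn))
      (fun y _ => div_pos (hμ y) hμn) (fun y _ => Real.exp_pos _)
      (by rw [← Finset.sum_div]; exact div_self hμn.ne')
    have hLHS : ∑ y ∈ Finset.univ.filter (fun y => nest y = nn),
        (μ y / μn nest μ nn) * Real.log (Real.exp (U y / lam nn) / (μ y / μn nest μ nn)) =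
        (∑ y ∈ Finset.univ.filter (fun y => nest y = nn), μ y * U y) / (lam nn * μn nest μ nn)
          + Real.log (μn nest μ nn)
          - (∑ y ∈ Finset.univ.filter (fun y => nest y = nn), μ y * Real.log (μ y)) / μn nest μ nn := by
      have each : ∀ y ∈ Finset.univ.filter (fun y => nest y = nn),
          (μ y / μn nest μ nn) * Real.log (Real.exp (U y / lam nn) / (μ y / μn nest μ nn)) =
            (μ y * U y) / (lam nn * μn nest μ nn) + (μ y * Real.log (μn nest μ nn)) / μn nest μ nn
              - (μ y * Real.log (μ y)) / μn nest μ nn := by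
        intro y _
        rw [Real.log_div (Real.exp_pos _).ne' (div_pos (hμ y) hμn).ne', Real.log_exp,
          Real.log_div (hμ y).ne' hμn.ne']
        field_simp
        ring
      rw [Finset.sum_congr rfl each, Finset.sum_sub_distrib, Finset.sum_add_distrib,
        ← Finset.sum_div, ← Finset.sum_div, ← Finset.sum_div, ← Finset.sum_mul]
      rw [show (∑ y ∈ Finset.univ.filter (fun y => nest y = nn), μ y) = μn nest μ nn from rfl,
        mul_comm (μn nest μ nn), mul_div_assoc, div_self hμn.ne', mul_one]
    rw [hLHS] at h
    have h2 := mul_le_mul_of_nonneg_left h (le_of_lt (by positivity : (0:ℝ) < lam nn * μn nest μ nn))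
    have h3 : lam nn * μn nest μ nn *
        ((∑ y ∈ Finset.univ.filter (fun y => nest y = nn), μ y * U y) / (lam nn * μn nest μ nn)
          + Real.log (μn nest μ nn)
          - (∑ y ∈ Finset.univ.filter (fun y => nest y = nn), μ y * Real.log (μ y)) / μn nest μ nn) =
        (∑ y ∈ Finset.univ.filter (fun y => nest y = nn), μ y * U y)
          + lam nn * μn nest μ nn * Real.log (μn nest μ nn)
          - lam nn * (∑ y ∈ Finset.univ.filter (fun y => nest y = nn), μ y * Real.log (μ y)) := by
      field_simp
    rw [h3] at h2
    nlinarith [h2]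
  -- outer Gibbs
  have houter : -(μ0 * Real.log μ0) +
      ∑ nn : N, μn nest μ nn * (lam nn * Real.log (S nn) - Real.log (μn nest μ nn)) ≤
      Gnested nest lam U := by
    have h := gibbs_ineq (Finset.univ : Finset (Option N))
      (fun o => o.elim μ0 (μn nest μ)) (fun o => o.elim 1 (fun nn => S nn ^ lam nn))
      (fun o _ => by cases o with
        | none => exact hμ0
        | some nn => exact hμnpos nn)
      (fun o _ => by cases o with
        | none => exact one_pos
        | some nn => exact Real.rpow_pos_of_pos (hS nn) _)
      (by rw [Fintype.sum_option]; simp only [Option.elim]; rw [sum_μn]; ring)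
    rw [Fintype.sum_option, Fintype.sum_option] at h
    simp only [Option.elim] at h
    have hl1 : μ0 * Real.log (1 / μ0) = -(μ0 * Real.log μ0) := by
      rw [one_div, Real.log_inv]; ring
    rw [hl1] at h
    have hterms : ∀ nn ∈ (Finset.univ : Finset N),
        μn nest μ nn * Real.log (S nn ^ lam nn / μn nest μ nn) =
          μn nest μ nn * (lam nn * Real.log (S nn) - Real.log (μn nest μ nn)) := by
      intro nn _
      rw [Real.log_div (Real.rpow_pos_of_pos (hS nn) _).ne' (hμnpos nn).ne',
        Real.log_rpow (hS nn)]
    rw [Finset.sum_congr rfl hterms] at h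
    have hG : Gnested nest lam U = Real.log (1 + ∑ nn : N, S nn ^ lam nn) := rfl
    rw [hG]
    exact h
  have hsum1 := Finset.sum_le_sum (fun nn (_ : nn ∈ (Finset.univ : Finset N)) => inner nn)
  rw [Finset.sum_sub_distrib, Finset.sum_fiberwise] at hsum1
  linarith [hsum1, houter]

end
section
include hnest hlam hμ hμ0

lemma hasFDerivAt_G :
    HasFDerivAt (Gnested nest lam)
      (∑ y : Y, μ y • (ContinuousLinearMap.proj y : (Y → ℝ) →L[ℝ] ℝ))
      (Ustar nest lam μ) := by
  set μ0 := 1 - ∑ y, μ y with hμ0def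
  set Us := Ustar nest lam μ with hUs
  have hμnpos : ∀ nn, 0 < μn nest μ nn := μn_pos hnest hμ
  -- derivative of each exp term
  have hstep1 : ∀ nn : N, HasFDerivAt
      (fun (U : Y → ℝ) => ∑ y ∈ Finset.univ.filter (fun y => nest y = nn),
        Real.exp (U y / lam nn))
      (∑ y ∈ Finset.univ.filter (fun y => nest y = nn),
        (Real.exp (Us y / lam nn) / lam nn) • (ContinuousLinearMap.proj y : (Y → ℝ) →L[ℝ] ℝ))
      Us := by
    intro nn
    apply HasFDerivAt.fun_sum
    intro y _
    have h1 : HasFDerivAt (fun U : Y → ℝ => U y)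
        (ContinuousLinearMap.proj y : (Y → ℝ) →L[ℝ] ℝ) Us :=
      hasFDerivAt_apply y Us
    have h2 := (h1.mul_const ((lam nn)⁻¹)).exp
    have heq : (fun U : Y → ℝ => Real.exp (U y / lam nn)) =
        fun U : Y → ℝ => Real.exp (U y * (lam nn)⁻¹) := by
      funext U; rw [div_eq_mul_inv]
    rw [heq]
    refine h2.congr_fderiv ?_
    rw [smul_smul]
    simp only [div_eq_mul_inv]
  have hS : ∀ nn, (0:ℝ) < ∑ y ∈ Finset.univ.filter (fun y => nest y = nn),
      Real.exp (Us y / lam nn) := by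
    intro nn
    obtain ⟨y, hy⟩ := hnest nn
    exact Finset.sum_pos (fun y _ => Real.exp_pos _) ⟨y, by simp [hy]⟩
  -- derivative of each nest rpow term
  have hstep2 : ∀ nn : N, HasFDerivAt
      (fun (U : Y → ℝ) => (∑ y ∈ Finset.univ.filter (fun y => nest y = nn),
        Real.exp (U y / lam nn)) ^ (lam nn))
      ((lam nn * (∑ y ∈ Finset.univ.filter (fun y => nest y = nn),
          Real.exp (Us y / lam nn)) ^ (lam nn - 1)) •
        ∑ y ∈ Finset.univ.filter (fun y => nest y = nn),
          (Real.exp (Us y / lam nn) / lam nn) • (ContinuousLinearMap.proj y : (Y → ℝ) →L[ℝ] ℝ))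
      Us := fun nn => (hstep1 nn).rpow_const (Or.inl (hS nn).ne')
  have hstep3 := ((HasFDerivAt.fun_sum (fun nn (_ : nn ∈ (Finset.univ : Finset N)) =>
    hstep2 nn)).const_add 1).log
    (by
      have : (0:ℝ) < 1 + ∑ nn : N, (∑ y ∈ Finset.univ.filter (fun y => nest y = nn),
          Real.exp (Us y / lam nn)) ^ (lam nn) := by
        have : (0:ℝ) ≤ ∑ nn : N, (∑ y ∈ Finset.univ.filter (fun y => nest y = nn),
            Real.exp (Us y / lam nn)) ^ (lam nn) :=
          Finset.sum_nonneg fun nn _ => (Real.rpow_pos_of_pos (hS nn) _).le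
        linarith
      exact this.ne')
  have hGeq : HasFDerivAt (Gnested nest lam)
      ((1 + ∑ nn : N, (∑ y ∈ Finset.univ.filter (fun y => nest y = nn),
          Real.exp (Us y / lam nn)) ^ (lam nn))⁻¹ •
        ∑ nn : N, ((lam nn * (∑ y ∈ Finset.univ.filter (fun y => nest y = nn),
            Real.exp (Us y / lam nn)) ^ (lam nn - 1)) •
          ∑ y ∈ Finset.univ.filter (fun y => nest y = nn),
            (Real.exp (Us y / lam nn) / lam nn) •
              (ContinuousLinearMap.proj y : (Y → ℝ) →L[ℝ] ℝ))) Us := hstep3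
  -- now identify the derivative with ∑ μ y • proj y
  convert hGeq using 1
  have hFv : (1 + ∑ nn : N, (∑ y ∈ Finset.univ.filter (fun y => nest y = nn),
      Real.exp (Us y / lam nn)) ^ (lam nn)) = μ0⁻¹ := Fval hnest hlam hμ hμ0
  rw [hFv, inv_inv]
  ext v
  simp only [ContinuousLinearMap.sum_apply, ContinuousLinearMap.smul_apply,
    ContinuousLinearMap.proj_apply, smul_eq_mul]
  rw [← Finset.sum_fiberwise Finset.univ nest (fun y => μ y * v y), Finset.mul_sum]
  apply Finset.sum_congr rfl
  intro nn _
  rw [Finset.mul_sum, Finset.mul_sum]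
  apply Finset.sum_congr rfl
  intro y hy
  rw [Finset.mem_filter] at hy
  have coef : μ0 * (lam nn * (∑ y ∈ Finset.univ.filter (fun y => nest y = nn),
      Real.exp (Us y / lam nn)) ^ (lam nn - 1) *
        (Real.exp (Us y / lam nn) / lam nn)) = μ y := by
    rw [sum_exp_Ustar hnest hlam hμ hμ0, ← hy.2, exp_Ustar hnest hlam hμ hμ0, hy.2]
    rw [← hμ0def]
    set x := μn nest μ nn / μ0 with hx
    have hxpos : 0 < x := div_pos (hμnpos nn) hμ0
    rw [← Real.rpow_mul hxpos.le]
    have hxx : x ^ ((lam nn - 1) / lam nn) * x ^ ((1 - lam nn) / lam nn) = 1 := by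
      rw [← Real.rpow_add hxpos,
        show (lam nn - 1) / lam nn + (1 - lam nn) / lam nn = 0 by ring, Real.rpow_zero]
    rw [show (1 / lam nn) * (lam nn - 1) = (lam nn - 1) / lam nn by ring]
    have hl := (hlam nn).ne'
    field_simp
    linear_combination μ y * hxx
  rw [← mul_assoc, mul_comm (μ y), ← coef]
  ring

end

/-- **Example 1 (nested logit).** On the interior of the simplex, the
Legendre–Fenchel transform of the nested logit Emax is the nested entropy, the
supremum being attained at
`U_y = λ_n log(μ_y/μ_0) + (1−λ_n) log(μ_n/μ_0)`, at which point the gradient of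
`G` is `μ`. -/
theorem nested_logit_entropy
    (nest : Y → N) (hnest : Function.Surjective nest)
    (lam : N → ℝ) (hlam : ∀ nn, 0 < lam nn) (hlam1 : ∀ nn, lam nn ≤ 1)
    (μ : Y → ℝ) (hμ : ∀ y, 0 < μ y) (hμ0 : 0 < 1 - ∑ y, μ y) :
    -- the conjugate value
    (sSup {r : ℝ | ∃ U : Y → ℝ, r = (∑ y, μ y * U y) - Gnested nest lam U} =
      (1 - ∑ y, μ y) * Real.log (1 - ∑ y, μ y) +
        ∑ nn : N, (lam nn *
            ∑ y ∈ Finset.univ.filter (fun y => nest y = nn), μ y * Real.log (μ y) +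
          (1 - lam nn) *
            (∑ y ∈ Finset.univ.filter (fun y => nest y = nn), μ y) *
            Real.log (∑ y ∈ Finset.univ.filter (fun y => nest y = nn), μ y))) ∧
    -- the supremum is attained at the stated vector U…
    (∀ U : Y → ℝ,
      (∑ y, μ y * U y) - Gnested nest lam U ≤
        (∑ y, μ y * (lam (nest y) * Real.log (μ y / (1 - ∑ y', μ y')) +
            (1 - lam (nest y)) *
              Real.log ((∑ y' ∈ Finset.univ.filter (fun y' => nest y' = nest y), μ y') /
                (1 - ∑ y', μ y')))) -
          Gnested nest lam (fun y => lam (nest y) * Real.log (μ y / (1 - ∑ y', μ y')) +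
            (1 - lam (nest y)) *
              Real.log ((∑ y' ∈ Finset.univ.filter (fun y' => nest y' = nest y), μ y') /
                (1 - ∑ y', μ y')))) ∧
    -- … and at this U the gradient of G equals μ
    DifferentiableAt ℝ (Gnested nest lam)
      (fun y => lam (nest y) * Real.log (μ y / (1 - ∑ y', μ y')) +
        (1 - lam (nest y)) *
          Real.log ((∑ y' ∈ Finset.univ.filter (fun y' => nest y' = nest y), μ y') /
            (1 - ∑ y', μ y'))) ∧
    (∀ y : Y,
      fderiv ℝ (Gnested nest lam)
        (fun y'' => lam (nest y'') * Real.log (μ y'' / (1 - ∑ y', μ y')) +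
          (1 - lam (nest y'')) *
            Real.log ((∑ y' ∈ Finset.univ.filter (fun y' => nest y' = nest y''), μ y') /
              (1 - ∑ y', μ y')))
        (Pi.single y (1 : ℝ)) = μ y) := by
  refine ⟨?_, ?_, ?_, ?_⟩
  · apply IsGreatest.csSup_eq
    constructor
    · exact ⟨Ustar nest lam μ, (val_Ustar hnest hlam hμ hμ0).symm⟩
    · rintro r ⟨U, rfl⟩
      exact bound_Ustar hnest hlam hμ hμ0 U
  · intro U
    show (∑ y, μ y * U y) - Gnested nest lam U ≤
      (∑ y, μ y * Ustar nest lam μ y) - Gnested nest lam (Ustar nest lam μ)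
    rw [val_Ustar hnest hlam hμ hμ0]
    exact bound_Ustar hnest hlam hμ hμ0 U
  · exact (hasFDerivAt_G hnest hlam hμ hμ0).differentiableAt
  · intro y
    show fderiv ℝ (Gnested nest lam) (Ustar nest lam μ) (Pi.single y (1:ℝ)) = μ y
    rw [(hasFDerivAt_G hnest hlam hμ hμ0).fderiv]
    simp [ContinuousLinearMap.sum_apply, ContinuousLinearMap.smul_apply,
      ContinuousLinearMap.proj_apply, Pi.single_apply, mul_ite, Finset.sum_ite_eq']

end
end

section
/- Fix Φ : 𝒳×𝒴 → ℝ and strictly positive margins n : 𝒳 → ℝ, m : 𝒴 → ℝ. The function μ ↦ Σ_{x,y} μ_xy Φ_xy + 𝓔_CS(μ, n, m) admits a unique maximizer over feasible matchings, and this maximizer has μ_xy > 0, μ_x0 > 0 and μ_0y > 0 for all x, y. Moreover, a feasible matching μ with all μ_xy, μ_x0, μ_0y strictly positive is the maximizer if and only if 2 log μ_xy = log μ_x0 + log μ_0y + Φ_xy for all (x,y) ∈ 𝒳×𝒴 — equivalently, μ_xy = √(μ_x0 · μ_0y) · exp(Φ_xy/2) for all (x,y). -/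
open MeasureTheory Real
open scoped Classical

noncomputable section

variable {X Y : Type*} [Fintype X] [Nonempty X] [Fintype Y] [Nonempty Y]

/-! ### Auxiliary material -/

/-- Tangent-line inequality for `t ↦ t log t`. -/
lemma csAux_tangent_le {t b : ℝ} (ht : 0 < t) (hb : 0 < b) :
    b * Real.log b + (Real.log b + 1) * (t - b) ≤ t * Real.log t := by
  have h := Real.log_le_sub_one_of_pos (show 0 < b / t by positivity)
  have h2 : t * Real.log (b / t) ≤ b - t := by
    have := mul_le_mul_of_nonneg_left h ht.le
    calc t * Real.log (b/t) ≤ t * (b/t - 1) := this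
    _ = b - t := by field_simp
  rw [Real.log_div hb.ne' ht.ne'] at h2
  nlinarith [h2]

lemma csAux_tangent_lt {t b : ℝ} (ht : 0 < t) (hb : 0 < b) (hne : t ≠ b) :
    b * Real.log b + (Real.log b + 1) * (t - b) < t * Real.log t := by
  have h := Real.log_lt_sub_one_of_pos (show 0 < b / t by positivity)
    (by intro hh; apply hne; field_simp at hh; linarith)
  have h2 : t * Real.log (b / t) < t * (b/t - 1) := (mul_lt_mul_iff_right₀ ht).2 h
  have h3 : t * (b/t - 1) = b - t := by field_simp
  rw [Real.log_div hb.ne' ht.ne'] at h2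
  nlinarith

/-- The gap in the tangent-line inequality. -/
def csGap (t b : ℝ) : ℝ :=
  t * Real.log t - b * Real.log b - (Real.log b + 1) * (t - b)

lemma csGap_nonneg {t b : ℝ} (ht : 0 < t) (hb : 0 < b) : 0 ≤ csGap t b := by
  have := csAux_tangent_le ht hb; rw [csGap]; linarith

lemma csGap_pos {t b : ℝ} (ht : 0 < t) (hb : 0 < b) (hne : t ≠ b) : 0 < csGap t b := by
  have := csAux_tangent_lt ht hb hne; rw [csGap]; linarith

/-- Positive root of `u^2 + s*u = c`. -/
def csQroot (c s : ℝ) : ℝ := 2 * c / (s + Real.sqrt (s ^ 2 + 4 * c))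

lemma csQroot_denom_pos {c s : ℝ} (hc : 0 < c) (hs : 0 ≤ s) :
    0 < s + Real.sqrt (s ^ 2 + 4 * c) := by
  have : 0 < Real.sqrt (s ^ 2 + 4 * c) := Real.sqrt_pos.2 (by nlinarith)
  linarith

lemma csQroot_pos {c s : ℝ} (hc : 0 < c) (hs : 0 ≤ s) : 0 < csQroot c s :=
  div_pos (by linarith) (csQroot_denom_pos hc hs)

lemma csQroot_spec {c s : ℝ} (hc : 0 < c) (hs : 0 ≤ s) :
    csQroot c s ^ 2 + s * csQroot c s = c := by
  have hd := csQroot_denom_pos hc hs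
  have hsq : Real.sqrt (s ^ 2 + 4 * c) ^ 2 = s ^ 2 + 4 * c :=
    Real.sq_sqrt (by nlinarith)
  have h1 : csQroot c s = (Real.sqrt (s ^ 2 + 4 * c) - s) / 2 := by
    rw [csQroot, div_eq_div_iff hd.ne' two_ne_zero]
    nlinarith
  rw [h1]; nlinarith

lemma csQroot_le_sqrt {c s : ℝ} (hc : 0 < c) (hs : 0 ≤ s) :
    csQroot c s ≤ Real.sqrt c := by
  have hsc : 0 < Real.sqrt c := Real.sqrt_pos.2 hc
  have h1 : 2 * Real.sqrt c ≤ s + Real.sqrt (s ^ 2 + 4 * c) := by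
    have : Real.sqrt (4 * c) ≤ Real.sqrt (s ^ 2 + 4 * c) :=
      Real.sqrt_le_sqrt (by nlinarith)
    have h4 : Real.sqrt (4 * c) = 2 * Real.sqrt c := by
      rw [show (4:ℝ) * c = (2:ℝ)^2 * c by ring, Real.sqrt_mul (by positivity),
        Real.sqrt_sq (by norm_num)]
    linarith
  rw [csQroot, div_le_iff₀ (csQroot_denom_pos hc hs)]
  nlinarith [Real.sq_sqrt hc.le]

lemma csQroot_antitone {c s s' : ℝ} (hc : 0 < c) (hs : 0 ≤ s) (hss' : s ≤ s') :
    csQroot c s' ≤ csQroot c s := by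
  apply div_le_div_of_nonneg_left (by linarith) (csQroot_denom_pos hc hs)
  have : Real.sqrt (s ^ 2 + 4 * c) ≤ Real.sqrt (s' ^ 2 + 4 * c) :=
    Real.sqrt_le_sqrt (by nlinarith)
  linarith

lemma csQroot_tendsto {c : ℝ} (hc : 0 < c) {f : ℕ → ℝ} {a : ℝ} (ha : 0 ≤ a)
    (hf : Filter.Tendsto f Filter.atTop (nhds a)) :
    Filter.Tendsto (fun k => csQroot c (f k)) Filter.atTop (nhds (csQroot c a)) := by
  unfold csQroot
  apply Filter.Tendsto.div tendsto_const_nhds _ (csQroot_denom_pos hc ha).ne'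
  apply hf.add
  have h1 : Filter.Tendsto (fun k => f k ^ 2 + 4 * c) Filter.atTop (nhds (a ^ 2 + 4 * c)) := by
    have := (hf.mul hf).add (tendsto_const_nhds (x := 4 * c))
    simpa [sq] using this
  exact (Real.continuous_sqrt.continuousAt.tendsto).comp h1

/-- Existence of an interior solution to the Choo–Siow system. -/
lemma csAux_exists_solution (n : X → ℝ) (m : Y → ℝ) (hn : ∀ x, 0 < n x)
    (hm : ∀ y, 0 < m y) (Φ : X → Y → ℝ) :
    ∃ μs : X → Y → ℝ, (∀ x y, 0 < μs x y) ∧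
      (∀ x, 0 < n x - ∑ y, μs x y) ∧ (∀ y, 0 < m y - ∑ x, μs x y) ∧
      (∀ x y, 2 * Real.log (μs x y) =
        Real.log (n x - ∑ y', μs x y') + Real.log (m y - ∑ x', μs x' y) + Φ x y) := by
  classical
  set K : X → Y → ℝ := fun x y => Real.exp (Φ x y / 2) with hK
  have hKpos : ∀ x y, 0 < K x y := fun x y => Real.exp_pos _
  set S : (Y → ℝ) → X → ℝ := fun v x => ∑ y, K x y * v y with hS
  set U : (Y → ℝ) → X → ℝ := fun v x => csQroot (n x) (S v x) with hU
  set T : (Y → ℝ) → Y → ℝ :=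
    fun v y => csQroot (m y) (∑ x, K x y * U v x) with hT
  have hSnn : ∀ v : Y → ℝ, (∀ y, 0 ≤ v y) → ∀ x, 0 ≤ S v x := fun v hv x =>
    Finset.sum_nonneg fun y _ => mul_nonneg (hKpos x y).le (hv y)
  have hUpos : ∀ v : Y → ℝ, (∀ y, 0 ≤ v y) → ∀ x, 0 < U v x := fun v hv x =>
    csQroot_pos (hn x) (hSnn v hv x)
  have hTsum_nn : ∀ v : Y → ℝ, (∀ y, 0 ≤ v y) → ∀ y, 0 ≤ ∑ x, K x y * U v x :=
    fun v hv y => Finset.sum_nonneg fun x _ =>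
      mul_nonneg (hKpos x y).le (hUpos v hv x).le
  have hTpos : ∀ v : Y → ℝ, (∀ y, 0 ≤ v y) → ∀ y, 0 < T v y := fun v hv y =>
    csQroot_pos (hm y) (hTsum_nn v hv y)
  have hTle : ∀ v : Y → ℝ, (∀ y, 0 ≤ v y) → ∀ y, T v y ≤ Real.sqrt (m y) :=
    fun v hv y => csQroot_le_sqrt (hm y) (hTsum_nn v hv y)
  have hmono : ∀ v v' : Y → ℝ, (∀ y, 0 ≤ v y) → (∀ y, v y ≤ v' y) →
      ∀ y, T v y ≤ T v' y := by
    intro v v' hv hvv' y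
    have hv' : ∀ y, 0 ≤ v' y := fun y => (hv y).trans (hvv' y)
    have hSle : ∀ x, S v x ≤ S v' x := fun x =>
      Finset.sum_le_sum fun y _ => mul_le_mul_of_nonneg_left (hvv' y) (hKpos x y).le
    have hUle : ∀ x, U v' x ≤ U v x := fun x =>
      csQroot_antitone (hn x) (hSnn v hv x) (hSle x)
    have : ∑ x, K x y * U v' x ≤ ∑ x, K x y * U v x :=
      Finset.sum_le_sum fun x _ => mul_le_mul_of_nonneg_left (hUle x) (hKpos x y).le
    exact csQroot_antitone (hm y) (hTsum_nn v' hv' y) this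
  -- the iteration
  set w : ℕ → Y → ℝ := fun k => T^[k] (fun _ => 0) with hw
  have hwsucc : ∀ k, w (k + 1) = T (w k) := by
    intro k; rw [hw]; simp [Function.iterate_succ_apply']
  have hwnn : ∀ k y, 0 ≤ w k y := by
    intro k
    induction k with
    | zero => intro y; simp [hw]
    | succ k ih => intro y; rw [hwsucc]; exact (hTpos _ ih y).le
  have hwmono : ∀ k y, w k y ≤ w (k + 1) y := by
    intro k
    induction k with
    | zero =>
      intro y; rw [hwsucc]
      simpa [hw] using (hTpos _ (fun _ => le_refl 0) y).le
    | succ k ih =>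
      intro y; rw [hwsucc, hwsucc]
      exact hmono _ _ (hwnn k) ih y
  have hwbdd : ∀ y, BddAbove (Set.range fun k => w k y) := by
    intro y
    refine ⟨Real.sqrt (m y), ?_⟩
    rintro z ⟨k, rfl⟩
    cases k with
    | zero => simpa [hw] using Real.sqrt_nonneg (m y)
    | succ k =>
      show w (k + 1) y ≤ Real.sqrt (m y)
      rw [hwsucc]; exact hTle _ (hwnn k) y
  set v : Y → ℝ := fun y => ⨆ k, w k y with hv
  have htend : ∀ y, Filter.Tendsto (fun k => w k y) Filter.atTop (nhds (v y)) := fun y =>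
    tendsto_atTop_ciSup (monotone_nat_of_le_succ fun k => hwmono k y) (hwbdd y)
  have hvnn : ∀ y, 0 ≤ v y := fun y => (hwnn 0 y).trans (le_ciSup (hwbdd y) 0)
  have hTcont : ∀ y, Filter.Tendsto (fun k => T (w k) y) Filter.atTop (nhds (T v y)) := by
    intro y
    have hStend : ∀ x, Filter.Tendsto (fun k => S (w k) x) Filter.atTop (nhds (S v x)) := by
      intro x
      apply tendsto_finset_sum
      intro y' _
      exact (htend y').const_mul (K x y')
    have hUtend : ∀ x, Filter.Tendsto (fun k => U (w k) x) Filter.atTop (nhds (U v x)) :=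
      fun x => csQroot_tendsto (hn x) (hSnn v hvnn x) (hStend x)
    have hsum : Filter.Tendsto (fun k => ∑ x, K x y * U (w k) x) Filter.atTop
        (nhds (∑ x, K x y * U v x)) := by
      apply tendsto_finset_sum
      intro x _
      exact (hUtend x).const_mul (K x y)
    exact csQroot_tendsto (hm y) (hTsum_nn v hvnn y) hsum
  have hfix : T v = v := by
    funext y
    refine tendsto_nhds_unique (hTcont y) ?_
    have : Filter.Tendsto (fun k => w (k + 1) y) Filter.atTop (nhds (v y)) :=
      (htend y).comp (Filter.tendsto_add_atTop_nat 1)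
    simpa [hwsucc] using this
  set u : X → ℝ := U v with hu
  have hupos : ∀ x, 0 < u x := hUpos v hvnn
  have hvpos : ∀ y, 0 < v y := by
    intro y
    have := hTpos v hvnn y
    rwa [hfix] at this
  refine ⟨fun x y => u x * v y * K x y,
    fun x y => mul_pos (mul_pos (hupos x) (hvpos y)) (hKpos x y), ?_, ?_, ?_⟩
  · intro x
    have hrow : ∑ y, u x * v y * K x y = u x * S v x := by
      rw [hS, Finset.mul_sum]
      exact Finset.sum_congr rfl fun y _ => by ring
    have := csQroot_spec (hn x) (hSnn v hvnn x)
    rw [hrow]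
    have hux : u x = csQroot (n x) (S v x) := rfl
    nlinarith [sq_nonneg (u x), hupos x]
  · intro y
    have hcol : ∑ x, u x * v y * K x y = v y * ∑ x, K x y * u x := by
      rw [Finset.mul_sum]
      exact Finset.sum_congr rfl fun x _ => by ring
    have hvy : v y = csQroot (m y) (∑ x, K x y * U v x) := (congrFun hfix y).symm
    have := csQroot_spec (hm y) (hTsum_nn v hvnn y)
    simp only [← hu] at this hvy
    rw [← hvy] at this
    rw [hcol]
    nlinarith [hvpos y]
  · intro x y
    have hrow : n x - ∑ y', u x * v y' * K x y' = u x ^ 2 := by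
      have hrow' : ∑ y', u x * v y' * K x y' = u x * S v x := by
        rw [hS, Finset.mul_sum]
        exact Finset.sum_congr rfl fun y' _ => by ring
      have := csQroot_spec (hn x) (hSnn v hvnn x)
      rw [hrow']
      have hux : u x = csQroot (n x) (S v x) := rfl
      nlinarith
    have hcol : m y - ∑ x', u x' * v y * K x' y = v y ^ 2 := by
      have hcol' : ∑ x', u x' * v y * K x' y = v y * ∑ x', K x' y * u x' := by
        rw [Finset.mul_sum]
        exact Finset.sum_congr rfl fun x' _ => by ring
      have hvy : v y = csQroot (m y) (∑ x', K x' y * U v x') := (congrFun hfix y).symm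
      have := csQroot_spec (hm y) (hTsum_nn v hvnn y)
      simp only [← hu] at this hvy
      rw [← hvy] at this
      rw [hcol']
      nlinarith
    rw [hrow, hcol]
    have hKxy : Real.log (K x y) = Φ x y / 2 := by rw [hK]; exact Real.log_exp _
    rw [Real.log_mul (mul_pos (hupos x) (hvpos y)).ne' (hKpos x y).ne',
      Real.log_mul (hupos x).ne' (hvpos y).ne',
      Real.log_pow, Real.log_pow, hKxy]
    push_cast
    ring

/-- The (finite) value of the objective, up to an additive constant. -/
def csGreal (n : X → ℝ) (m : Y → ℝ) (Φ : X → Y → ℝ) (μ : X → Y → ℝ) : ℝ :=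
  (∑ x, ∑ y, μ x y * Φ x y) - (∑ x, ∑ y, 2 * (μ x y * Real.log (μ x y)))
    - (∑ x, (n x - ∑ y, μ x y) * Real.log (n x - ∑ y, μ x y))
    - ∑ y, (m y - ∑ x, μ x y) * Real.log (m y - ∑ x, μ x y)

lemma csAux_CSGain_eq (n : X → ℝ) (m : Y → ℝ) (Φ : X → Y → ℝ) (μ : X → Y → ℝ)
    (hn : ∀ x, 0 < n x) (hm : ∀ y, 0 < m y)
    (h1 : ∀ x y, 0 < μ x y) (h2 : ∀ x, 0 < n x - ∑ y, μ x y)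
    (h3 : ∀ y, 0 < m y - ∑ x, μ x y) :
    CSGain n m Φ μ = ((csGreal n m Φ μ +
      ((∑ x, n x * Real.log (n x)) + ∑ y, m y * Real.log (m y)) : ℝ) : EReal) := by
  rw [CSGain, ECS, if_pos ⟨h1, h2, h3⟩, ← EReal.coe_add]
  norm_cast
  have hA : ∀ x, (∑ y, μ x y * Real.log (μ x y / n x)) +
      (n x - ∑ y, μ x y) * Real.log ((n x - ∑ y', μ x y') / n x)
      = ((∑ y, μ x y * Real.log (μ x y)) +
        (n x - ∑ y, μ x y) * Real.log (n x - ∑ y, μ x y)) - n x * Real.log (n x) := by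
    intro x
    have e1 : ∑ y, μ x y * Real.log (μ x y / n x)
        = (∑ y, μ x y * Real.log (μ x y)) - (∑ y, μ x y) * Real.log (n x) := by
      rw [Finset.sum_mul, ← Finset.sum_sub_distrib]
      refine Finset.sum_congr rfl fun y _ => ?_
      rw [Real.log_div (h1 x y).ne' (hn x).ne']; ring
    rw [e1, Real.log_div (h2 x).ne' (hn x).ne']; ring
  have hB : ∀ y, (∑ x, μ x y * Real.log (μ x y / m y)) +
      (m y - ∑ x, μ x y) * Real.log ((m y - ∑ x', μ x' y) / m y)
      = ((∑ x, μ x y * Real.log (μ x y)) +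
        (m y - ∑ x, μ x y) * Real.log (m y - ∑ x, μ x y)) - m y * Real.log (m y) := by
    intro y
    have e1 : ∑ x, μ x y * Real.log (μ x y / m y)
        = (∑ x, μ x y * Real.log (μ x y)) - (∑ x, μ x y) * Real.log (m y) := by
      rw [Finset.sum_mul, ← Finset.sum_sub_distrib]
      refine Finset.sum_congr rfl fun x _ => ?_
      rw [Real.log_div (h1 x y).ne' (hm y).ne']; ring
    rw [e1, Real.log_div (h3 y).ne' (hm y).ne']; ring
  simp only [hA, hB, Finset.sum_sub_distrib, Finset.sum_add_distrib]
  rw [csGreal]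
  have swap : ∀ f : X → Y → ℝ, (∑ y, ∑ x, f x y) = ∑ x, ∑ y, f x y :=
    fun f => Finset.sum_comm
  rw [swap (fun x y => μ x y * Real.log (μ x y))]
  have c1 : (∑ x, ∑ y, 2 * (μ x y * Real.log (μ x y)))
      = 2 * ∑ x, ∑ y, μ x y * Real.log (μ x y) := by
    rw [Finset.mul_sum]
    exact Finset.sum_congr rfl fun x _ => by rw [Finset.mul_sum]
  rw [c1]; ring

/-- The fundamental identity: the gap between the objective at a CS solution `μ0`
and at another point `ν` is a sum of tangent-line gaps. -/
lemma csAux_identity (n : X → ℝ) (m : Y → ℝ) (Φ : X → Y → ℝ) (μ0 ν : X → Y → ℝ)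
    (hCS : ∀ x y, Φ x y = 2 * Real.log (μ0 x y) -
      Real.log (n x - ∑ y', μ0 x y') - Real.log (m y - ∑ x', μ0 x' y)) :
    csGreal n m Φ μ0 - csGreal n m Φ ν =
      (∑ x, ∑ y, 2 * csGap (ν x y) (μ0 x y))
      + (∑ x, csGap (n x - ∑ y, ν x y) (n x - ∑ y, μ0 x y))
      + (∑ y, csGap (m y - ∑ x, ν x y) (m y - ∑ x, μ0 x y)) := by
  have hrow : ∀ x, (n x - ∑ y, ν x y) - (n x - ∑ y, μ0 x y) = ∑ y, (μ0 x y - ν x y) := by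
    intro x; rw [Finset.sum_sub_distrib]; ring
  have hcol : ∀ y, (m y - ∑ x, ν x y) - (m y - ∑ x, μ0 x y) = ∑ x, (μ0 x y - ν x y) := by
    intro y; rw [Finset.sum_sub_distrib]; ring
  unfold csGreal csGap
  simp only [hCS, hrow, hcol, Finset.mul_sum, Finset.sum_mul, mul_add, mul_sub,
    add_mul, sub_mul, Finset.sum_add_distrib, Finset.sum_sub_distrib]
  have swap : ∀ f : X → Y → ℝ, (∑ y, ∑ x, f x y) = ∑ x, ∑ y, f x y :=
    fun f => Finset.sum_comm
  repeat rw [swap]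
  simp only [one_mul, mul_comm, mul_assoc, mul_left_comm]
  ring_nf
  simp only [Finset.sum_mul]
  have c1 : ∀ (f : X → Y → ℝ), (∑ x, ∑ y, f x y * Real.log (f x y) * 2)
      = ∑ x, ∑ y, f x y * 2 * Real.log (f x y) := fun f =>
    Finset.sum_congr rfl fun x _ => Finset.sum_congr rfl fun y _ => by ring
  linear_combination

/-- A CS solution weakly dominates every feasible matching. -/
lemma csAux_le (n : X → ℝ) (m : Y → ℝ) (hn : ∀ x, 0 < n x) (hm : ∀ y, 0 < m y)
    (Φ : X → Y → ℝ) (μ0 : X → Y → ℝ)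
    (h01 : ∀ x y, 0 < μ0 x y) (h02 : ∀ x, 0 < n x - ∑ y, μ0 x y)
    (h03 : ∀ y, 0 < m y - ∑ x, μ0 x y)
    (hCS : ∀ x y, 2 * Real.log (μ0 x y) =
      Real.log (n x - ∑ y', μ0 x y') + Real.log (m y - ∑ x', μ0 x' y) + Φ x y)
    (ν : X → Y → ℝ) :
    CSGain n m Φ ν ≤ CSGain n m Φ μ0 := by
  have hCS' : ∀ x y, Φ x y = 2 * Real.log (μ0 x y) -
      Real.log (n x - ∑ y', μ0 x y') - Real.log (m y - ∑ x', μ0 x' y) := by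
    intro x y; linarith [hCS x y]
  by_cases hint : (∀ x y, 0 < ν x y) ∧ (∀ x, 0 < n x - ∑ y, ν x y) ∧
      (∀ y, 0 < m y - ∑ x, ν x y)
  · obtain ⟨hi1, hi2, hi3⟩ := hint
    rw [csAux_CSGain_eq n m Φ μ0 hn hm h01 h02 h03,
      csAux_CSGain_eq n m Φ ν hn hm hi1 hi2 hi3, EReal.coe_le_coe_iff]
    have hid := csAux_identity n m Φ μ0 ν hCS'
    have t1 : 0 ≤ ∑ x, ∑ y, 2 * csGap (ν x y) (μ0 x y) :=
      Finset.sum_nonneg fun x _ => Finset.sum_nonneg fun y _ => by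
        have := csGap_nonneg (hi1 x y) (h01 x y); linarith
    have t2 : 0 ≤ ∑ x, csGap (n x - ∑ y, ν x y) (n x - ∑ y, μ0 x y) :=
      Finset.sum_nonneg fun x _ => csGap_nonneg (hi2 x) (h02 x)
    have t3 : 0 ≤ ∑ y, csGap (m y - ∑ x, ν x y) (m y - ∑ x, μ0 x y) :=
      Finset.sum_nonneg fun y _ => csGap_nonneg (hi3 y) (h03 y)
    linarith
  · rw [CSGain, ECS, if_neg hint, EReal.add_bot]
    exact bot_le

/-- A CS solution strictly dominates every other interior matching. -/
lemma csAux_lt (n : X → ℝ) (m : Y → ℝ) (hn : ∀ x, 0 < n x) (hm : ∀ y, 0 < m y)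
    (Φ : X → Y → ℝ) (μ0 : X → Y → ℝ)
    (h01 : ∀ x y, 0 < μ0 x y) (h02 : ∀ x, 0 < n x - ∑ y, μ0 x y)
    (h03 : ∀ y, 0 < m y - ∑ x, μ0 x y)
    (hCS : ∀ x y, 2 * Real.log (μ0 x y) =
      Real.log (n x - ∑ y', μ0 x y') + Real.log (m y - ∑ x', μ0 x' y) + Φ x y)
    (ν : X → Y → ℝ)
    (hi1 : ∀ x y, 0 < ν x y) (hi2 : ∀ x, 0 < n x - ∑ y, ν x y)
    (hi3 : ∀ y, 0 < m y - ∑ x, ν x y) (hne : ν ≠ μ0) :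
    CSGain n m Φ ν < CSGain n m Φ μ0 := by
  have hCS' : ∀ x y, Φ x y = 2 * Real.log (μ0 x y) -
      Real.log (n x - ∑ y', μ0 x y') - Real.log (m y - ∑ x', μ0 x' y) := by
    intro x y; linarith [hCS x y]
  rw [csAux_CSGain_eq n m Φ μ0 hn hm h01 h02 h03,
    csAux_CSGain_eq n m Φ ν hn hm hi1 hi2 hi3, EReal.coe_lt_coe_iff]
  have hid := csAux_identity n m Φ μ0 ν hCS'
  have hex : ∃ x y, ν x y ≠ μ0 x y := by
    by_contra h
    push_neg at h
    exact hne (funext fun x => funext fun y => h x y)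
  obtain ⟨x0, y0, hxy⟩ := hex
  have t1 : 0 < ∑ x, ∑ y, 2 * csGap (ν x y) (μ0 x y) := by
    apply Finset.sum_pos'
    · intro x _
      exact Finset.sum_nonneg fun y _ => by
        have := csGap_nonneg (hi1 x y) (h01 x y); linarith
    · refine ⟨x0, Finset.mem_univ _, ?_⟩
      apply Finset.sum_pos'
      · intro y _
        have := csGap_nonneg (hi1 x0 y) (h01 x0 y); linarith
      · refine ⟨y0, Finset.mem_univ _, ?_⟩
        have := csGap_pos (hi1 x0 y0) (h01 x0 y0) hxy; linarith
  have t2 : 0 ≤ ∑ x, csGap (n x - ∑ y, ν x y) (n x - ∑ y, μ0 x y) :=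
    Finset.sum_nonneg fun x _ => csGap_nonneg (hi2 x) (h02 x)
  have t3 : 0 ≤ ∑ y, csGap (m y - ∑ x, ν x y) (m y - ∑ x, μ0 x y) :=
    Finset.sum_nonneg fun y _ => csGap_nonneg (hi3 y) (h03 y)
  linarith

/-- Equivalence of the logarithmic and square-root forms of the CS equations. -/
lemma csAux_log_iff_sqrt (n : X → ℝ) (m : Y → ℝ) (Φ : X → Y → ℝ) (μ : X → Y → ℝ)
    (h1 : ∀ x y, 0 < μ x y) (h2 : ∀ x, 0 < n x - ∑ y, μ x y)
    (h3 : ∀ y, 0 < m y - ∑ x, μ x y) :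
    (∀ x y, 2 * Real.log (μ x y) =
      Real.log (n x - ∑ y', μ x y') + Real.log (m y - ∑ x', μ x' y) + Φ x y) ↔
    (∀ x y, μ x y = Real.sqrt ((n x - ∑ y', μ x y') * (m y - ∑ x', μ x' y)) *
      Real.exp (Φ x y / 2)) := by
  constructor
  · intro h x y
    have hx := h x y
    set a := n x - ∑ y', μ x y' with ha
    set b := m y - ∑ x', μ x' y with hb
    have hap := h2 x
    have hbp := h3 y
    rw [← ha] at hap
    rw [← hb] at hbp
    have key : μ x y = Real.exp (Real.log a / 2 + Real.log b / 2 + Φ x y / 2) := by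
      rw [← Real.exp_log (h1 x y)]
      congr 1
      linarith
    have hsab : Real.sqrt (a * b) = Real.exp (Real.log (a * b) / 2) := by
      rw [← Real.log_sqrt (by positivity), Real.exp_log (Real.sqrt_pos.2 (by positivity))]
    rw [key, hsab, ← Real.exp_add, Real.log_mul hap.ne' hbp.ne']
    congr 1
    ring
  · intro h x y
    have hx := h x y
    have hap := h2 x
    have hbp := h3 y
    have hlog := congrArg Real.log hx
    rw [Real.log_mul (by positivity) (Real.exp_ne_zero _), Real.log_exp,
      Real.log_sqrt (by positivity), Real.log_mul hap.ne' hbp.ne'] at hlog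
    linarith

/-- **The Choo–Siow model (Example 3): existence, uniqueness, interiority and
characterization of the stable matching.** The social gain has a unique
maximizer over feasible matchings; it is strictly interior; and an interior
feasible matching is the maximizer iff it satisfies the Choo–Siow equations
`2 log μ_xy = log μ_x0 + log μ_0y + Φ_xy`, equivalently
`μ_xy = √(μ_x0 μ_0y) exp(Φ_xy/2)`. -/
theorem chooSiow_characterization
    (n : X → ℝ) (m : Y → ℝ) (hn : ∀ x, 0 < n x) (hm : ∀ y, 0 < m y)
    (Φ : X → Y → ℝ) :
    ∃ μs : X → Y → ℝ,
      Feasible n m μs ∧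
      (∀ μ : X → Y → ℝ, Feasible n m μ → CSGain n m Φ μ ≤ CSGain n m Φ μs) ∧
      -- uniqueness of the maximizer
      (∀ μ : X → Y → ℝ, Feasible n m μ →
        (∀ μ' : X → Y → ℝ, Feasible n m μ' → CSGain n m Φ μ' ≤ CSGain n m Φ μ) →
        μ = μs) ∧
      -- interiority
      (∀ x y, 0 < μs x y) ∧
      (∀ x, 0 < n x - ∑ y, μs x y) ∧ (∀ y, 0 < m y - ∑ x, μs x y) ∧
      -- characterization of the maximizer among interior feasible matchings
      (∀ μ : X → Y → ℝ, Feasible n m μ →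
        (∀ x y, 0 < μ x y) →
        (∀ x, 0 < n x - ∑ y, μ x y) → (∀ y, 0 < m y - ∑ x, μ x y) →
        ((μ = μs) ↔
          ∀ x y, 2 * Real.log (μ x y) =
            Real.log (n x - ∑ y', μ x y') + Real.log (m y - ∑ x', μ x' y) + Φ x y) ∧
        ((μ = μs) ↔
          ∀ x y, μ x y =
            Real.sqrt ((n x - ∑ y', μ x y') * (m y - ∑ x', μ x' y)) *
              Real.exp (Φ x y / 2))) := by
  obtain ⟨μs, hs1, hs2, hs3, hsCS⟩ := csAux_exists_solution n m hn hm Φ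
  have hfs : Feasible n m μs :=
    ⟨fun x y => (hs1 x y).le, fun x => by linarith [hs2 x], fun y => by linarith [hs3 y]⟩
  have hmax : ∀ μ : X → Y → ℝ, CSGain n m Φ μ ≤ CSGain n m Φ μs :=
    fun μ => csAux_le n m hn hm Φ μs hs1 hs2 hs3 hsCS μ
  have hiff1 : ∀ μ : X → Y → ℝ,
      (∀ x y, 0 < μ x y) → (∀ x, 0 < n x - ∑ y, μ x y) → (∀ y, 0 < m y - ∑ x, μ x y) →
      ((μ = μs) ↔
        ∀ x y, 2 * Real.log (μ x y) =
          Real.log (n x - ∑ y', μ x y') + Real.log (m y - ∑ x', μ x' y) + Φ x y) := by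
    intro μ hi1 hi2 hi3
    constructor
    · rintro rfl; exact hsCS
    · intro hCSμ
      by_contra hne
      have hlt1 : CSGain n m Φ μ < CSGain n m Φ μs :=
        csAux_lt n m hn hm Φ μs hs1 hs2 hs3 hsCS μ hi1 hi2 hi3 hne
      have hlt2 : CSGain n m Φ μs < CSGain n m Φ μ :=
        csAux_lt n m hn hm Φ μ hi1 hi2 hi3 hCSμ μs hs1 hs2 hs3 (Ne.symm hne)
      exact absurd (hlt1.trans hlt2) (lt_irrefl _)
  refine ⟨μs, hfs, fun μ _ => hmax μ, ?_, hs1, hs2, hs3, ?_⟩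
  · -- uniqueness
    intro μ hμ hmaxμ
    have hle := hmaxμ μs hfs
    by_cases hint : (∀ x y, 0 < μ x y) ∧ (∀ x, 0 < n x - ∑ y, μ x y) ∧
        (∀ y, 0 < m y - ∑ x, μ x y)
    · obtain ⟨hi1, hi2, hi3⟩ := hint
      by_contra hne
      have hlt : CSGain n m Φ μ < CSGain n m Φ μs :=
        csAux_lt n m hn hm Φ μs hs1 hs2 hs3 hsCS μ hi1 hi2 hi3 hne
      exact absurd (lt_of_lt_of_le hlt hle) (lt_irrefl _)
    · exfalso
      have hbot : CSGain n m Φ μ = ⊥ := by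
        rw [CSGain, ECS, if_neg hint, EReal.add_bot]
      rw [hbot] at hle
      have := csAux_CSGain_eq n m Φ μs hn hm hs1 hs2 hs3
      rw [this] at hle
      exact absurd (le_bot_iff.1 hle) (EReal.coe_ne_bot _)
  · -- characterization
    intro μ _ hi1 hi2 hi3
    refine ⟨hiff1 μ hi1 hi2 hi3, ?_⟩
    exact (hiff1 μ hi1 hi2 hi3).trans (csAux_log_iff_sqrt n m Φ μ hi1 hi2 hi3)

end
end

section
/- Let γ denote the Euler–Mascheroni constant, let ν be the standard Gumbel distribution on ℝ, i.e. the Borel probability measure with density x ↦ exp(−x − exp(−x)) with respect to Lebesgue measure, let S be a finite nonempty set, and let P = ⊗_{s∈S} ν be the product measure on ℝ^{S}. Then for every U : S → ℝ, the function ε ↦ max_{s∈S}(U_s + ε_s) is P-integrable and ∫ max_{s∈S}(U_s + ε_s) dP(ε) = log( Σ_{s∈S} exp(U_s) ) + γ. -/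
open MeasureTheory

noncomputable section

section GumbelAuxiliary
open Set Filter Real


lemma logexp_integrableOn : IntegrableOn (fun t : ℝ => Real.log t * Real.exp (-t)) (Set.Ioi 0) := by
  have h := (mellin_hasDerivAt_of_isBigO_rpow (E := ℂ) (a := 2) (b := 0)
      (f := fun t : ℝ => (Real.exp (-t) : ℂ)) (s := 1) ?_ ?_ ?_ ?_ ?_).1
  · unfold MellinConvergent at h
    have h2 : IntegrableOn (fun t : ℝ => ((Real.log t * Real.exp (-t) : ℝ) : ℂ)) (Set.Ioi 0) := by
      refine h.congr_fun (fun t ht => ?_) measurableSet_Ioi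
      simp [Complex.cpow_zero, Complex.ofReal_mul, smul_eq_mul]
    have h3 := h2.re
    have he : (fun x : ℝ => RCLike.re ((Real.log x * Real.exp (-x) : ℝ) : ℂ))
        = fun t => Real.log t * Real.exp (-t) := by
      funext x; exact RCLike.ofReal_re _
    rwa [he] at h3
  · refine (Continuous.continuousOn ?_).locallyIntegrableOn measurableSet_Ioi
    exact Complex.continuous_ofReal.comp (Real.continuous_exp.comp continuous_neg)
  · rw [← Asymptotics.isBigO_norm_left]
    simp_rw [Complex.norm_real,
      Asymptotics.isBigO_norm_left]
    simpa only [neg_one_mul] using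
      (isLittleO_exp_neg_mul_rpow_atTop zero_lt_one (-2)).isBigO
  · norm_num
  · simp_rw [neg_zero, Real.rpow_zero]
    refine Asymptotics.isBigO_const_of_tendsto (?_ : Tendsto _ _ (nhds (1 : ℂ))) one_ne_zero
    rw [(by simp : (1 : ℂ) = Real.exp (-0))]
    exact (Complex.continuous_ofReal.comp
      (Real.continuous_exp.comp continuous_neg)).continuousWithinAt
  · norm_num

lemma logexp_integral : ∫ t in Set.Ioi (0:ℝ), Real.log t * Real.exp (-t)
    = -Real.eulerMascheroniConstant := by
  have h := Complex.hasDerivAt_GammaIntegral (s := 1) (by norm_num)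
  have heq : (∫ t : ℝ in Set.Ioi 0, (t : ℂ) ^ ((1:ℂ) - 1) * (Real.log t * Real.exp (-t)))
      = ((∫ t in Set.Ioi (0:ℝ), Real.log t * Real.exp (-t) : ℝ) : ℂ) := by
    rw [setIntegral_congr_fun measurableSet_Ioi
      (fun t _ => by simp [Complex.cpow_zero] : ∀ t ∈ Set.Ioi (0:ℝ),
        (t : ℂ) ^ ((1:ℂ) - 1) * (Real.log t * Real.exp (-t))
          = ((Real.log t * Real.exp (-t) : ℝ) : ℂ))]
    exact integral_ofReal
  rw [heq] at h
  have hG : HasDerivAt Complex.Gamma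
      ((∫ t in Set.Ioi (0:ℝ), Real.log t * Real.exp (-t) : ℝ) : ℂ) 1 := by
    refine h.congr_of_eventuallyEq ?_
    have hopn : IsOpen {s : ℂ | 0 < s.re} := isOpen_lt continuous_const Complex.continuous_re
    filter_upwards [hopn.mem_nhds (by norm_num : (0:ℝ) < (1:ℂ).re)] with s hs
    exact Complex.Gamma_eq_integral hs
  have := hG.unique Complex.hasDerivAt_Gamma_one
  exact_mod_cast this






def gden (x : ℝ) : ℝ := Real.exp (-x - Real.exp (-x))

lemma gden_nonneg (x : ℝ) : 0 ≤ gden x := (Real.exp_pos _).le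

lemma gden_neg_log {t : ℝ} (ht : 0 < t) : gden (-Real.log t) = t * Real.exp (-t) := by
  rw [gden]
  simp only [neg_neg]
  rw [Real.exp_sub, Real.exp_log ht, Real.exp_neg, div_eq_mul_inv]

lemma neg_log_hasDerivWithinAt {b : ℝ} (hb : 0 ≤ b) :
    ∀ t ∈ Set.Ioi b, HasDerivWithinAt (fun t : ℝ => -Real.log t) (-t⁻¹) (Set.Ioi b) t :=
  fun t ht => ((Real.hasDerivAt_log (lt_of_le_of_lt hb ht).ne').neg).hasDerivWithinAt

lemma neg_log_injOn {b : ℝ} (hb : 0 ≤ b) :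
    Set.InjOn (fun t : ℝ => -Real.log t) (Set.Ioi b) := by
  intro x hx y hy h
  have hx0 : 0 < x := lt_of_le_of_lt hb hx
  have hy0 : 0 < y := lt_of_le_of_lt hb hy
  have : Real.log x = Real.log y := by linarith [neg_injective h]
  exact Real.log_injOn_pos (Set.mem_Ioi.mpr hx0) (Set.mem_Ioi.mpr hy0) this

lemma neg_log_image_zero : (fun t : ℝ => -Real.log t) '' Set.Ioi 0 = Set.univ := by
  ext y
  simp only [Set.mem_image, Set.mem_univ, iff_true, Set.mem_Ioi]
  exact ⟨Real.exp (-y), Real.exp_pos _, by rw [Real.log_exp, neg_neg]⟩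

lemma neg_log_image {b : ℝ} (hb : 0 < b) :
    (fun t : ℝ => -Real.log t) '' Set.Ioi b = Set.Iio (-Real.log b) := by
  ext y
  simp only [Set.mem_image, Set.mem_Iio, Set.mem_Ioi]
  constructor
  · rintro ⟨t, ht, rfl⟩
    exact neg_lt_neg (Real.log_lt_log hb ht)
  · intro hy
    refine ⟨Real.exp (-y), ?_, by rw [Real.log_exp, neg_neg]⟩
    have : Real.log b < -y := by linarith
    calc b = Real.exp (Real.log b) := (Real.exp_log hb).symm
    _ < Real.exp (-y) := Real.exp_lt_exp.mpr this

lemma gden_integrable : Integrable gden := by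
  rw [← integrableOn_univ, ← neg_log_image_zero,
    integrableOn_image_iff_integrableOn_abs_deriv_smul measurableSet_Ioi
      (neg_log_hasDerivWithinAt le_rfl) (neg_log_injOn le_rfl)]
  have : IntegrableOn (fun t : ℝ => Real.exp (-t)) (Set.Ioi 0) := by
    simpa only [neg_one_mul] using exp_neg_integrableOn_Ioi 0 one_pos
  refine this.congr_fun (fun t ht => ?_) measurableSet_Ioi
  rw [Set.mem_Ioi] at ht
  rw [gden_neg_log ht, smul_eq_mul, abs_neg, abs_inv, abs_of_pos ht]
  field_simp

lemma gden_integral_Iio (a : ℝ) : ∫ x in Set.Iio a, gden x = Real.exp (-Real.exp (-a)) := by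
  have hb : (0:ℝ) < Real.exp (-a) := Real.exp_pos _
  have himg : (fun t : ℝ => -Real.log t) '' Set.Ioi (Real.exp (-a)) = Set.Iio a := by
    rw [neg_log_image hb, Real.log_exp, neg_neg]
  rw [← himg, integral_image_eq_integral_abs_deriv_smul measurableSet_Ioi
    (neg_log_hasDerivWithinAt hb.le) (neg_log_injOn hb.le)]
  rw [setIntegral_congr_fun measurableSet_Ioi (g := fun t : ℝ => Real.exp (-t))
    (fun t ht => ?_)]
  · exact integral_exp_neg_Ioi _
  · rw [Set.mem_Ioi] at ht
    have ht0 : 0 < t := hb.trans ht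
    rw [gden_neg_log ht0, smul_eq_mul, abs_neg, abs_inv, abs_of_pos ht0]
    field_simp

lemma gden_integral_total : ∫ x, gden x = 1 := by
  rw [← setIntegral_univ, ← neg_log_image_zero, integral_image_eq_integral_abs_deriv_smul
    measurableSet_Ioi (neg_log_hasDerivWithinAt le_rfl) (neg_log_injOn le_rfl)]
  rw [setIntegral_congr_fun measurableSet_Ioi (g := fun t : ℝ => Real.exp (-t))
    (fun t ht => ?_)]
  · exact integral_exp_neg_Ioi_zero
  · rw [Set.mem_Ioi] at ht
    rw [gden_neg_log ht, smul_eq_mul, abs_neg, abs_inv, abs_of_pos ht]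
    field_simp

lemma id_mul_gden_integrable : Integrable (fun x : ℝ => x * gden x) := by
  rw [← integrableOn_univ, ← neg_log_image_zero,
    integrableOn_image_iff_integrableOn_abs_deriv_smul measurableSet_Ioi
      (neg_log_hasDerivWithinAt le_rfl) (neg_log_injOn le_rfl)]
  have hneg : IntegrableOn (fun t : ℝ => -(Real.log t * Real.exp (-t))) (Set.Ioi 0) :=
    logexp_integrableOn.neg
  refine hneg.congr_fun (fun t ht => ?_) measurableSet_Ioi
  rw [Set.mem_Ioi] at ht
  rw [gden_neg_log ht, smul_eq_mul, abs_neg, abs_inv, abs_of_pos ht]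
  field_simp

lemma id_mul_gden_integral : ∫ x : ℝ, x * gden x = Real.eulerMascheroniConstant := by
  rw [← setIntegral_univ, ← neg_log_image_zero, integral_image_eq_integral_abs_deriv_smul
    measurableSet_Ioi (neg_log_hasDerivWithinAt le_rfl) (neg_log_injOn le_rfl)]
  rw [setIntegral_congr_fun measurableSet_Ioi
    (g := fun t : ℝ => -(Real.log t * Real.exp (-t))) (fun t ht => ?_)]
  · rw [integral_neg, logexp_integral, neg_neg]
  · rw [Set.mem_Ioi] at ht
    rw [gden_neg_log ht, smul_eq_mul, abs_neg, abs_inv, abs_of_pos ht]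
    field_simp

end GumbelAuxiliary

/-- The standard Gumbel distribution on `ℝ`, with density
`x ↦ exp(−x − exp(−x))` with respect to Lebesgue measure. -/
def gumbel : Measure ℝ :=
  volume.withDensity (fun x => ENNReal.ofReal (Real.exp (-x - Real.exp (-x))))

section GumbelAuxiliary2
open Set Filter Real

lemma gden_measurable : Measurable gden := by
  unfold gden; fun_prop

lemma gumbel_eq : gumbel = volume.withDensity (fun x => ENNReal.ofReal (gden x)) := rfl

lemma gumbel_apply_Iic (a : ℝ) :
    gumbel (Set.Iic a) = ENNReal.ofReal (Real.exp (-Real.exp (-a))) := by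
  rw [gumbel_eq, withDensity_apply _ measurableSet_Iic,
    ← ofReal_integral_eq_lintegral_ofReal gden_integrable.integrableOn
      (ae_of_all _ gden_nonneg), integral_Iic_eq_integral_Iio, gden_integral_Iio]

instance gumbel_prob : IsProbabilityMeasure gumbel := by
  constructor
  rw [gumbel_eq, withDensity_apply _ MeasurableSet.univ, Measure.restrict_univ,
    ← ofReal_integral_eq_lintegral_ofReal gden_integrable (ae_of_all _ gden_nonneg),
    gden_integral_total, ENNReal.ofReal_one]

lemma integrable_id_gumbel : Integrable (fun x : ℝ => x) gumbel := by
  rw [gumbel_eq, integrable_withDensity_iff gden_measurable.ennreal_ofReal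
    (ae_of_all _ fun x => ENNReal.ofReal_lt_top)]
  have : (fun x : ℝ => x * (ENNReal.ofReal (gden x)).toReal) = fun x => x * gden x :=
    funext fun x => by rw [ENNReal.toReal_ofReal (gden_nonneg x)]
  rw [this]
  exact id_mul_gden_integrable

lemma integral_id_gumbel : ∫ x : ℝ, x ∂gumbel = Real.eulerMascheroniConstant := by
  have h : gumbel = volume.withDensity (fun x => ((gden x).toNNReal : ENNReal)) :=
    gumbel_eq
  rw [h, integral_withDensity_eq_integral_smul
    (show Measurable fun x : ℝ => (gden x).toNNReal from measurable_real_toNNReal.comp gden_measurable) (fun x : ℝ => x)]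
  rw [← id_mul_gden_integral]
  congr 1
  funext x
  rw [NNReal.smul_def, Real.coe_toNNReal _ (gden_nonneg x), smul_eq_mul, mul_comm]

end GumbelAuxiliary2

open Set Filter Real in
/-- **The logit Emax formula (McFadden).** If the `ε_s` are i.i.d. standard
Gumbel, then `E[max_s (U_s + ε_s)] = log Σ_s exp(U_s) + γ`, where `γ` is the
Euler–Mascheroni constant. -/
theorem gumbel_emax_formula
    {S : Type*} [Fintype S] [Nonempty S] (U : S → ℝ) :
    Integrable
      (fun ε : S → ℝ => Finset.univ.sup' Finset.univ_nonempty (fun s => U s + ε s))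
      (Measure.pi fun _ : S => gumbel) ∧
    ∫ ε : S → ℝ,
        Finset.univ.sup' Finset.univ_nonempty (fun s => U s + ε s)
        ∂(Measure.pi fun _ : S => gumbel) =
      Real.log (∑ s, Real.exp (U s)) + Real.eulerMascheroniConstant := by
  set c := Real.log (∑ s, Real.exp (U s)) with hc
  have hsum : 0 < ∑ s, Real.exp (U s) :=
    Finset.sum_pos (fun s _ => Real.exp_pos _) Finset.univ_nonempty
  have hexp_c : Real.exp c = ∑ s, Real.exp (U s) := Real.exp_log hsum
  set M := fun ε : S → ℝ => Finset.univ.sup' Finset.univ_nonempty (fun s => U s + ε s) with hMdef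
  have hM : Measurable M := by
    have heq : M = Finset.univ.sup' Finset.univ_nonempty (fun s (ε : S → ℝ) => U s + ε s) := by
      funext ε; rw [Finset.sup'_apply]
    rw [heq]
    exact Finset.measurable_sup' Finset.univ_nonempty
      (fun s _ => measurable_const.add (measurable_pi_apply s))
  set P := Measure.pi fun _ : S => gumbel with hP
  have hpre : ∀ a : ℝ, M ⁻¹' (Set.Iic a) = Set.pi Set.univ (fun s => Set.Iic (a - U s)) := by
    intro a
    ext ε
    simp only [Set.mem_preimage, Set.mem_Iic, hMdef, Finset.sup'_le_iff, Set.mem_pi,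
      Set.mem_univ, forall_true_left, Finset.mem_univ, forall_const, le_sub_iff_add_le']
  have hcdf : ∀ a : ℝ,
      Measure.map M P (Set.Iic a) = ENNReal.ofReal (Real.exp (-Real.exp (-(a - c)))) := by
    intro a
    rw [Measure.map_apply hM measurableSet_Iic, hpre, hP, Measure.pi_pi]
    simp only [gumbel_apply_Iic]
    rw [← ENNReal.ofReal_prod_of_nonneg (fun s _ => (Real.exp_pos _).le)]
    congr 1
    rw [← Real.exp_sum]
    congr 1
    have : ∀ s : S, -Real.exp (-(a - U s)) = -(Real.exp (U s) * Real.exp (-a)) := by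
      intro s; rw [neg_sub, Real.exp_sub, Real.exp_neg]; ring
    simp_rw [this]
    rw [Finset.sum_neg_distrib, ← Finset.sum_mul, ← hexp_c, neg_sub, Real.exp_sub,
      Real.exp_neg]
    ring
  have hcdf' : ∀ a : ℝ,
      Measure.map (fun x => c + x) gumbel (Set.Iic a)
        = ENNReal.ofReal (Real.exp (-Real.exp (-(a - c)))) := by
    intro a
    rw [Measure.map_apply (measurable_const_add c) measurableSet_Iic]
    have : (fun x : ℝ => c + x) ⁻¹' Set.Iic a = Set.Iic (a - c) := by
      ext x; simp only [Set.mem_preimage, Set.mem_Iic, le_sub_iff_add_le']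
    rw [this, gumbel_apply_Iic]
  have hmapP : IsProbabilityMeasure (Measure.map M P) :=
    Measure.isProbabilityMeasure_map hM.aemeasurable
  have hmapeq : Measure.map M P = Measure.map (fun x => c + x) gumbel :=
    Measure.ext_of_Iic _ _ (fun a => by rw [hcdf a, hcdf' a])
  have hint_shift : Integrable (fun x : ℝ => c + x) gumbel :=
    (integrable_const c).add integrable_id_gumbel
  have hint_map : Integrable (fun x : ℝ => x) (Measure.map M P) := by
    rw [hmapeq]
    exact (integrable_map_measure aestronglyMeasurable_id
      (measurable_const_add c).aemeasurable).mpr hint_shift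
  have hintM : Integrable M P :=
    (integrable_map_measure aestronglyMeasurable_id hM.aemeasurable).mp hint_map
  refine ⟨hintM, ?_⟩
  have h1 : ∫ ε, M ε ∂P = ∫ x : ℝ, x ∂(Measure.map M P) :=
    (integral_map hM.aemeasurable aestronglyMeasurable_id).symm
  rw [show (∫ ε : S → ℝ, Finset.univ.sup' Finset.univ_nonempty (fun s => U s + ε s) ∂P)
      = ∫ ε, M ε ∂P from rfl, h1, hmapeq,
    integral_map (f := fun x : ℝ => x) (measurable_const_add c).aemeasurable
      measurable_id.aestronglyMeasurable]
  rw [integral_add (integrable_const c) integrable_id_gumbel, integral_id_gumbel,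
    integral_const, probReal_univ, one_smul]

end
end
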